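/- arXiv:2407.03934 — 6 statements merged into one kernel-verified Lean document; each statement's English description precedes it below -/
import Mathlib

section
/- For any hypergraph H = (V,E) and any hyperedge e ∈ E, the strength of e equals the maximum over all vertex subsets S with e ⊆ S ⊆ V of the minimum normalized k-cut value of the induced subhypergraph H[S]. Formally, λ_e = max_{e ⊆ S ⊆ V} Φ(H[S]). -/
open Finset

variable {V : Type*} [DecidableEq V] [Fintype V]

/-- `P` is a partition of the finite vertex set `S` into at least two nonempty parts. -/
def IsHPartition (S : Finset V) (P : Finset (Finset V)) : Prop :=
  (∀ p ∈ P, p.Nonempty) ∧ (P : Set (Finset V)).PairwiseDisjoint id ∧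
    P.sup id = S ∧ 2 ≤ P.card

/-- The hyperedges of `E` crossing the partition `P` (not contained in a single part). -/
def hcrossing (E : Finset (Finset V)) (P : Finset (Finset V)) : Finset (Finset V) :=
  E.filter fun e => ∀ p ∈ P, ¬ e ⊆ p

/-- Normalized value of the cut given by partition `P`. -/
noncomputable def hcutVal (E : Finset (Finset V)) (P : Finset (Finset V)) : ℝ :=
  ((hcrossing E P).card : ℝ) / ((P.card : ℝ) - 1)

/-- Hyperedges induced on the vertex subset `S`. -/
def hinduced (E : Finset (Finset V)) (S : Finset V) : Finset (Finset V) :=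
  E.filter fun e => e ⊆ S

/-- Minimum normalized k-cut value of the induced subhypergraph on `S`. -/
noncomputable def hPhi (E : Finset (Finset V)) (S : Finset V) : ℝ :=
  sInf {x : ℝ | ∃ P, IsHPartition S P ∧ x = hcutVal (hinduced E S) P}

/-- Strength of a hyperedge: `λ_e = max_{e ⊆ S} Φ(H[S])`. -/
noncomputable def hstrength (E : Finset (Finset V)) (e : Finset V) : ℝ :=
  sSup {x : ℝ | ∃ S : Finset V, e ⊆ S ∧ x = hPhi E S}

/-- `S` is connected in the hypergraph with edge set `E` (via hyperedges inside `S`). -/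
def HConnected (E : Finset (Finset V)) (S : Finset V) : Prop :=
  ∀ u ∈ S, ∀ v ∈ S,
    Relation.ReflTransGen (fun a b => ∃ e ∈ E, e ⊆ S ∧ a ∈ e ∧ b ∈ e) u v

/-- The recursive strength assignment: within the induced subhypergraph on `S`,
fixing a minimum normalized k-cut, crossing hyperedges get strength `Φ(H[S])`,
and the remaining hyperedges get strength assigned recursively inside their part. -/
inductive RecStrength (E : Finset (Finset V)) : Finset V → Finset V → ℝ → Prop
  | cross {S P e : Finset V} {Q : Finset (Finset V)} (hQ : IsHPartition S Q)
      (hmin : hcutVal (hinduced E S) Q = hPhi E S)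
      (he : e ∈ hcrossing (hinduced E S) Q) :
      RecStrength E S e (hPhi E S)
  | inside {S p e : Finset V} {Q : Finset (Finset V)} {x : ℝ} (hQ : IsHPartition S Q)
      (hmin : hcutVal (hinduced E S) Q = hPhi E S)
      (hp : p ∈ Q) (hep : e ⊆ p) (h : RecStrength E p e x) :
      RecStrength E S e x


section StrengthProof

variable {V : Type*} [DecidableEq V] [Fintype V]

lemma hcutVal_nonneg {E Q : Finset (Finset V)} {S : Finset V} (hQ : IsHPartition S Q) :
    0 ≤ hcutVal E Q := by
  have h2 : (2:ℝ) ≤ (Q.card : ℝ) := by exact_mod_cast hQ.2.2.2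
  apply div_nonneg (by positivity)
  linarith

lemma hPhi_bddBelow (E : Finset (Finset V)) (S : Finset V) :
    BddBelow {x : ℝ | ∃ P, IsHPartition S P ∧ x = hcutVal (hinduced E S) P} :=
  ⟨0, by rintro y ⟨P, hP, rfl⟩; exact hcutVal_nonneg hP⟩

lemma hPhi_le {E : Finset (Finset V)} {S : Finset V} {P : Finset (Finset V)}
    (hP : IsHPartition S P) : hPhi E S ≤ hcutVal (hinduced E S) P :=
  csInf_le (hPhi_bddBelow E S) ⟨P, hP, rfl⟩

lemma part_subset {S : Finset V} {Q : Finset (Finset V)} (hQ : IsHPartition S Q)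
    {p : Finset V} (hp : p ∈ Q) : p ⊆ S := by
  have h := Finset.le_sup (f := id) hp
  rw [hQ.2.2.1] at h
  exact h

/-- Any partition of a part of a minimum normalized cut has value at least `Φ(H[S])`. -/
lemma le_hPhi_part {E : Finset (Finset V)} {S p : Finset V} {Q : Finset (Finset V)}
    (hQ : IsHPartition S Q) (hmin : hcutVal (hinduced E S) Q = hPhi E S)
    (hp : p ∈ Q) (hne : ∃ R, IsHPartition p R) :
    hPhi E S ≤ hPhi E p := by
  obtain ⟨R₀, hR₀⟩ := hne
  refine le_csInf ⟨_, R₀, hR₀, rfl⟩ ?_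
  rintro y ⟨R, hR, rfl⟩
  have hpS : p ⊆ S := part_subset hQ hp
  obtain ⟨hQne, hQd, hQs, hQc⟩ := hQ
  obtain ⟨hRne, hRd, hRs, hRc⟩ := hR
  have hrp : ∀ r ∈ R, r ⊆ p := fun r hr => by
    have h := Finset.le_sup (f := id) hr; rw [hRs] at h; exact h
  have hdisjQR : Disjoint (Q.erase p) R := by
    rw [Finset.disjoint_left]
    intro a ha haR
    obtain ⟨hanep, haQ⟩ := Finset.mem_erase.mp ha
    have hd : Disjoint a p := hQd (Finset.mem_coe.mpr haQ) (Finset.mem_coe.mpr hp) hanep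
    have hsub : a ⊆ p := hrp a haR
    have : a = ∅ := Disjoint.eq_bot_of_le hd hsub
    exact (Finset.nonempty_iff_ne_empty.mp (hRne a haR)) this
  have hQ' : IsHPartition S (Q.erase p ∪ R) := by
    refine ⟨?_, ?_, ?_, ?_⟩
    · intro a ha
      rcases Finset.mem_union.mp ha with h | h
      · exact hQne a (Finset.mem_of_mem_erase h)
      · exact hRne a h
    · intro a ha b hb hab
      simp only [Finset.coe_union, Set.mem_union, Finset.mem_coe] at ha hb
      rcases ha with ha | ha <;> rcases hb with hb | hb
      · exact hQd (Finset.mem_coe.mpr (Finset.mem_of_mem_erase ha))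
          (Finset.mem_coe.mpr (Finset.mem_of_mem_erase hb)) hab
      · have hd : Disjoint a p := hQd (Finset.mem_coe.mpr (Finset.mem_of_mem_erase ha))
          (Finset.mem_coe.mpr hp) (Finset.mem_erase.mp ha).1
        exact hd.mono_right (hrp b hb)
      · have hd : Disjoint b p := hQd (Finset.mem_coe.mpr (Finset.mem_of_mem_erase hb))
          (Finset.mem_coe.mpr hp) (Finset.mem_erase.mp hb).1
        exact (hd.mono_right (hrp a ha)).symm
      · exact hRd (Finset.mem_coe.mpr ha) (Finset.mem_coe.mpr hb) hab
    · calc (Q.erase p ∪ R).sup id = (Q.erase p).sup id ⊔ R.sup id := Finset.sup_union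
        _ = (Q.erase p).sup id ⊔ p := by rw [hRs]
        _ = p ⊔ (Q.erase p).sup id := sup_comm _ _
        _ = (insert p (Q.erase p)).sup id := (Finset.sup_insert).symm
        _ = Q.sup id := by rw [Finset.insert_erase hp]
        _ = S := hQs
    · calc 2 ≤ R.card := hRc
        _ ≤ (Q.erase p ∪ R).card := Finset.card_le_card Finset.subset_union_right
  have hcardQ' : (Q.erase p ∪ R).card = (Q.card - 1) + R.card := by
    rw [Finset.card_union_of_disjoint hdisjQR, Finset.card_erase_of_mem hp]
  have hRne' : R.Nonempty := Finset.card_pos.mp (by omega)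
  obtain ⟨r₀, hr₀⟩ := hRne'
  have hcross : hcrossing (hinduced E S) (Q.erase p ∪ R)
      = hcrossing (hinduced E S) Q ∪ hcrossing (hinduced E p) R := by
    ext f
    simp only [hcrossing, hinduced, Finset.mem_filter, Finset.mem_union, Finset.mem_erase]
    constructor
    · rintro ⟨⟨hfE, hfS⟩, hf⟩
      by_cases hfp : f ⊆ p
      · exact Or.inr ⟨⟨hfE, hfp⟩, fun r hr => hf r (Or.inr hr)⟩
      · refine Or.inl ⟨⟨hfE, hfS⟩, fun q hq => ?_⟩
        by_cases hqp : q = p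
        · subst hqp; exact hfp
        · exact hf q (Or.inl ⟨hqp, hq⟩)
    · rintro (⟨⟨hfE, hfS⟩, hf⟩ | ⟨⟨hfE, hfp⟩, hf⟩)
      · refine ⟨⟨hfE, hfS⟩, fun a ha => ?_⟩
        rcases ha with ⟨hanep, haQ⟩ | haR
        · exact hf a haQ
        · intro hfa
          exact hf p hp (hfa.trans (hrp a haR))
      · have hfne : f.Nonempty := by
          rw [Finset.nonempty_iff_ne_empty]; rintro rfl
          exact hf r₀ hr₀ (Finset.empty_subset _)
        obtain ⟨v, hv⟩ := hfne
        refine ⟨⟨hfE, hfp.trans hpS⟩, fun a ha => ?_⟩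
        rcases ha with ⟨hanep, haQ⟩ | haR
        · intro hfa
          have hd : Disjoint a p := hQd (Finset.mem_coe.mpr haQ) (Finset.mem_coe.mpr hp) hanep
          exact (Finset.disjoint_left.mp hd (hfa hv)) (hfp hv)
        · exact hf a haR
  have hdisjC : Disjoint (hcrossing (hinduced E S) Q) (hcrossing (hinduced E p) R) := by
    rw [Finset.disjoint_left]
    rintro f hf1 hf2
    simp only [hcrossing, hinduced, Finset.mem_filter] at hf1 hf2
    exact hf1.2 p hp hf2.1.2
  have hle := hPhi_le (E := E) hQ'
  rw [← hmin] at hle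
  unfold hcutVal at hle hmin ⊢
  rw [hcross, Finset.card_union_of_disjoint hdisjC, hcardQ'] at hle
  set a := ((hcrossing (hinduced E S) Q).card : ℝ) with ha
  set b := ((hcrossing (hinduced E p) R).card : ℝ) with hb
  have hn : (2:ℝ) ≤ (Q.card : ℝ) := by exact_mod_cast hQc
  have hm : (2:ℝ) ≤ (R.card : ℝ) := by exact_mod_cast hRc
  have hcast : (((Q.card - 1) + R.card : ℕ) : ℝ) = (Q.card : ℝ) - 1 + (R.card : ℝ) := by
    have h1 : 1 ≤ Q.card := by omega
    push_cast [Nat.cast_sub h1]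
    ring
  rw [hcast] at hle
  have hpush : ((((hcrossing (hinduced E S) Q).card + (hcrossing (hinduced E p) R).card : ℕ)) : ℝ)
      = a + b := by push_cast; ring
  rw [hpush] at hle
  have hd1 : (0:ℝ) < (Q.card : ℝ) - 1 := by linarith
  have hd2 : (0:ℝ) < (R.card : ℝ) - 1 := by linarith
  have hd3 : (0:ℝ) < (Q.card : ℝ) - 1 + (R.card : ℝ) - 1 := by linarith
  have hle' := (le_div_iff₀ hd3).mp hle
  have ha' : a / ((Q.card:ℝ) - 1) * ((Q.card:ℝ) - 1) = a := by
    field_simp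
  rw [le_div_iff₀ hd2]
  nlinarith [hle', ha']

/-- If `T ⊆ S` crosses a minimum normalized cut of `H[S]`, then `Φ(H[T]) ≤ Φ(H[S])`. -/
lemma hPhi_le_of_cross {E : Finset (Finset V)} {S T : Finset V} {Q : Finset (Finset V)}
    (hQ : IsHPartition S Q) (hmin : hcutVal (hinduced E S) Q = hPhi E S)
    (hTS : T ⊆ S) (hcr : ∀ q ∈ Q, ¬ T ⊆ q) :
    hPhi E T ≤ hPhi E S := by
  classical
  obtain ⟨hQne, hQd, hQs, hQc⟩ := hQ
  set A := Q.filter (fun q => (q ∩ T).Nonempty) with hAdef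
  have hAQ : A ⊆ Q := Finset.filter_subset _ _
  have hcover : ∀ t ∈ T, ∃ q ∈ A, t ∈ q := by
    intro t ht
    have h : t ∈ Q.sup id := by rw [hQs]; exact hTS ht
    obtain ⟨q, hq, htq⟩ := Finset.mem_sup.mp h
    exact ⟨q, Finset.mem_filter.mpr ⟨hq, ⟨t, Finset.mem_inter.mpr ⟨htq, ht⟩⟩⟩, htq⟩
  have hQne' : Q.Nonempty := Finset.card_pos.mp (by omega)
  have hTne : T.Nonempty := by
    obtain ⟨q, hq⟩ := hQne'
    obtain ⟨t, ht, -⟩ := Finset.not_subset.mp (hcr q hq)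
    exact ⟨t, ht⟩
  obtain ⟨t₁, ht₁⟩ := hTne
  obtain ⟨q₁, hq₁A, ht₁q₁⟩ := hcover t₁ ht₁
  have hq₁Q : q₁ ∈ Q := hAQ hq₁A
  obtain ⟨t₂, ht₂, ht₂q₁⟩ := Finset.not_subset.mp (hcr q₁ hq₁Q)
  obtain ⟨q₂, hq₂A, ht₂q₂⟩ := hcover t₂ ht₂
  have hq12 : q₁ ≠ q₂ := fun h => ht₂q₁ (h ▸ ht₂q₂)
  have hAcard : 2 ≤ A.card := by
    rw [show (2:ℕ) = 1 + 1 by rfl]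
    exact Finset.one_lt_card.mpr ⟨q₁, hq₁A, q₂, hq₂A, hq12⟩
  set P := A.image (fun q => q ∩ T) with hPdef
  have hinj : Set.InjOn (fun q => q ∩ T) ↑A := by
    intro q hq q' hq' h
    by_contra hne
    have hd : Disjoint q q' := hQd (Finset.mem_coe.mpr (hAQ (Finset.mem_coe.mp hq)))
      (Finset.mem_coe.mpr (hAQ (Finset.mem_coe.mp hq'))) hne
    obtain ⟨v, hv⟩ := (Finset.mem_filter.mp (Finset.mem_coe.mp hq)).2
    have heq : q ∩ T = q' ∩ T := h
    have hv' : v ∈ q' ∩ T := heq ▸ hv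
    exact Finset.disjoint_left.mp hd (Finset.mem_inter.mp hv).1 (Finset.mem_inter.mp hv').1
  have hPcard : P.card = A.card := Finset.card_image_of_injOn hinj
  have hPart : IsHPartition T P := by
    refine ⟨?_, ?_, ?_, ?_⟩
    · intro a ha
      obtain ⟨q, hqA, rfl⟩ := Finset.mem_image.mp ha
      exact (Finset.mem_filter.mp hqA).2
    · intro a ha b hb hab
      obtain ⟨q, hqA, rfl⟩ := Finset.mem_image.mp (Finset.mem_coe.mp ha)
      obtain ⟨q', hq'A, rfl⟩ := Finset.mem_image.mp (Finset.mem_coe.mp hb)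
      have hne : q ≠ q' := fun h => hab (by rw [h])
      have hd : Disjoint q q' := hQd (Finset.mem_coe.mpr (hAQ hqA))
        (Finset.mem_coe.mpr (hAQ hq'A)) hne
      exact hd.mono Finset.inter_subset_left Finset.inter_subset_left
    · apply le_antisymm
      · apply Finset.sup_le
        intro a ha
        obtain ⟨q, hqA, rfl⟩ := Finset.mem_image.mp ha
        exact Finset.inter_subset_right
      · intro t ht
        obtain ⟨q, hqA, htq⟩ := hcover t ht
        exact Finset.mem_sup.mpr ⟨q ∩ T, Finset.mem_image.mpr ⟨q, hqA, rfl⟩,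
          Finset.mem_inter.mpr ⟨htq, ht⟩⟩
    · rw [hPcard]; exact hAcard
  have hcrP : ∀ f ∈ hcrossing (hinduced E T) P, f ∈ E ∧ f ⊆ T ∧ (∀ q ∈ Q, ¬ f ⊆ q) := by
    intro f hf
    simp only [hcrossing, hinduced, Finset.mem_filter] at hf
    obtain ⟨⟨hfE, hfT⟩, hfc⟩ := hf
    have hfne : f.Nonempty := by
      rw [Finset.nonempty_iff_ne_empty]; rintro rfl
      exact hfc (q₁ ∩ T) (Finset.mem_image.mpr ⟨q₁, hq₁A, rfl⟩) (Finset.empty_subset _)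
    refine ⟨hfE, hfT, fun q hq hfq => ?_⟩
    have hsub : f ⊆ q ∩ T := Finset.subset_inter hfq hfT
    obtain ⟨v, hv⟩ := hfne
    have hqA : q ∈ A := Finset.mem_filter.mpr ⟨hq, ⟨v, hsub hv⟩⟩
    exact hfc (q ∩ T) (Finset.mem_image.mpr ⟨q, hqA, rfl⟩) hsub
  have hd1 : (0:ℝ) < (Q.card : ℝ) - 1 := by
    have : (2:ℝ) ≤ (Q.card:ℝ) := by exact_mod_cast hQc
    linarith
  have hdA : (0:ℝ) < (A.card : ℝ) - 1 := by
    have : (2:ℝ) ≤ (A.card:ℝ) := by exact_mod_cast hAcard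
    linarith
  by_cases hcase : A = Q
  · -- every part meets T
    have hsub : hcrossing (hinduced E T) P ⊆ hcrossing (hinduced E S) Q := by
      intro f hf
      obtain ⟨hfE, hfT, hf3⟩ := hcrP f hf
      simp only [hcrossing, hinduced, Finset.mem_filter]
      exact ⟨⟨hfE, hfT.trans hTS⟩, hf3⟩
    calc hPhi E T ≤ hcutVal (hinduced E T) P := hPhi_le hPart
      _ ≤ hcutVal (hinduced E S) Q := by
          unfold hcutVal
          rw [hPcard, hcase]
          exact div_le_div_of_nonneg_right
            (by exact_mod_cast Finset.card_le_card hsub) hd1.le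
      _ = hPhi E S := hmin
  · -- some part misses T ; merge all parts meeting T
    set B := Q \ A with hBdef
    have hB : B.Nonempty := by
      rw [hBdef, Finset.sdiff_nonempty]
      exact fun h => hcase (Finset.Subset.antisymm hAQ h)
    set U := A.sup id with hUdef
    have hTU : T ⊆ U := by
      intro t ht
      obtain ⟨q, hqA, htq⟩ := hcover t ht
      exact Finset.mem_sup.mpr ⟨q, hqA, htq⟩
    have hUne : U.Nonempty := ⟨t₁, hTU ht₁⟩
    have hUB : ∀ b ∈ B, Disjoint U b := by
      intro b hb
      rw [Finset.disjoint_left]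
      intro v hvU hvb
      obtain ⟨q, hqA, hvq⟩ := Finset.mem_sup.mp hvU
      have hbB := Finset.mem_sdiff.mp hb
      have hne : q ≠ b := fun h => hbB.2 (h ▸ hqA)
      exact Finset.disjoint_left.mp
        (hQd (Finset.mem_coe.mpr (hAQ hqA)) (Finset.mem_coe.mpr hbB.1) hne) hvq hvb
    have hUnotB : U ∉ B := fun h => by
      obtain ⟨v, hv⟩ := hUne
      exact (Finset.disjoint_left.mp (hUB U h) hv) hv
    have hQ'p : IsHPartition S (insert U B) := by
      refine ⟨?_, ?_, ?_, ?_⟩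
      · intro a ha
        rcases Finset.mem_insert.mp ha with rfl | h
        · exact hUne
        · exact hQne a (Finset.mem_sdiff.mp h).1
      · intro a ha b hb hab
        simp only [Finset.coe_insert, Set.mem_insert_iff, Finset.mem_coe] at ha hb
        rcases ha with rfl | ha <;> rcases hb with rfl | hb
        · exact absurd rfl hab
        · exact hUB b hb
        · exact (hUB a ha).symm
        · exact hQd (Finset.mem_coe.mpr (Finset.mem_sdiff.mp ha).1)
            (Finset.mem_coe.mpr (Finset.mem_sdiff.mp hb).1) hab
      · calc (insert U B).sup id = U ⊔ B.sup id := Finset.sup_insert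
          _ = A.sup id ⊔ B.sup id := rfl
          _ = (A ∪ B).sup id := (Finset.sup_union).symm
          _ = Q.sup id := by rw [hBdef, Finset.union_sdiff_of_subset hAQ]
          _ = S := hQs
      · rw [Finset.card_insert_of_notMem hUnotB]
        have : 1 ≤ B.card := Finset.card_pos.mpr hB
        omega
    have hcrQ' : hcrossing (hinduced E S) (insert U B)
        = (hcrossing (hinduced E S) Q).filter (fun f => ¬ f ⊆ U) := by
      ext f
      simp only [hcrossing, hinduced, Finset.mem_filter]
      constructor
      · rintro ⟨⟨hfE, hfS⟩, hf⟩
        have hfU : ¬ f ⊆ U := hf U (Finset.mem_insert_self _ _)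
        refine ⟨⟨⟨hfE, hfS⟩, fun q hq hfq => ?_⟩, hfU⟩
        by_cases hqA : q ∈ A
        · exact hfU (hfq.trans (Finset.le_sup (f := id) hqA))
        · exact hf q (Finset.mem_insert_of_mem (Finset.mem_sdiff.mpr ⟨hq, hqA⟩)) hfq
      · rintro ⟨⟨⟨hfE, hfS⟩, hf⟩, hfU⟩
        refine ⟨⟨hfE, hfS⟩, fun a ha => ?_⟩
        rcases Finset.mem_insert.mp ha with rfl | haB
        · exact hfU
        · exact hf a (Finset.mem_sdiff.mp haB).1
    have hsub2 : hcrossing (hinduced E T) P ⊆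
        (hcrossing (hinduced E S) Q).filter (fun f => f ⊆ U) := by
      intro f hf
      obtain ⟨hfE, hfT, hf3⟩ := hcrP f hf
      simp only [hcrossing, hinduced, Finset.mem_filter]
      exact ⟨⟨⟨hfE, hfT.trans hTS⟩, hf3⟩, hfT.trans hTU⟩
    -- counting
    have hsplit := Finset.card_filter_add_card_filter_not
      (s := hcrossing (hinduced E S) Q) (p := fun f => f ⊆ U)
    have hcardsum : B.card + A.card = Q.card := Finset.card_sdiff_add_card_eq_card hAQ
    have hle := hPhi_le (E := E) hQ'p
    rw [← hmin] at hle
    refine le_trans (hPhi_le (E := E) hPart) ?_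
    unfold hcutVal at hle hmin ⊢
    rw [hcrQ', Finset.card_insert_of_notMem hUnotB] at hle
    set c : ℝ := ((hcrossing (hinduced E S) Q).card : ℝ) with hc
    set d : ℝ := (((hcrossing (hinduced E S) Q).filter (fun f => f ⊆ U)).card : ℝ) with hd
    set c' : ℝ := (((hcrossing (hinduced E S) Q).filter (fun f => ¬ f ⊆ U)).card : ℝ) with hc'
    have hsplitR : d + c' = c := by rw [hd, hc', hc]; exact_mod_cast hsplit
    have hcP : ((hcrossing (hinduced E T) P).card : ℝ) ≤ d := by
      rw [hd]; exact_mod_cast Finset.card_le_card hsub2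
    have hnB : (1:ℝ) ≤ (B.card : ℝ) := by
      have : 1 ≤ B.card := Finset.card_pos.mpr hB
      exact_mod_cast this
    have hBcast : ((B.card + 1 : ℕ) : ℝ) - 1 = (B.card : ℝ) := by push_cast; ring
    rw [hBcast] at hle
    have hnQ : (Q.card : ℝ) = (B.card : ℝ) + (A.card : ℝ) := by exact_mod_cast hcardsum.symm
    have hle' : (c / ((Q.card:ℝ) - 1)) * (B.card : ℝ) ≤ c' :=
      (le_div_iff₀ (by linarith)).mp hle
    have hminc : c = hPhi E S * ((Q.card : ℝ) - 1) :=
      (div_eq_iff (by linarith)).mp hmin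
    have hphiS : c / ((Q.card:ℝ) - 1) = hPhi E S := hmin
    -- d ≤ φ (A.card - 1)
    have hle2 : hPhi E S * (B.card : ℝ) ≤ c' := by rw [hphiS] at hle'; exact hle'
    have hring : hPhi E S * ((Q.card:ℝ) - 1)
        = hPhi E S * (B.card : ℝ) + hPhi E S * ((A.card:ℝ) - 1) := by rw [hnQ]; ring
    have hdle : d ≤ hPhi E S * ((A.card : ℝ) - 1) := by linarith
    calc (((hcrossing (hinduced E T) P).card : ℝ)) / ((P.card : ℝ) - 1)
        ≤ d / ((A.card : ℝ) - 1) := by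
          rw [hPcard]
          exact div_le_div_of_nonneg_right hcP hdA.le
      _ ≤ hPhi E S := by
          rw [div_le_iff₀ hdA]
          linarith [hdle]

lemma recStrength_exists_partition {E : Finset (Finset V)} {S e : Finset V} {x : ℝ}
    (h : RecStrength E S e x) : ∃ Q, IsHPartition S Q := by
  cases h with
  | cross hQ _ _ => exact ⟨_, hQ⟩
  | inside hQ _ _ _ _ => exact ⟨_, hQ⟩

lemma recStrength_main {E : Finset (Finset V)} {S e : Finset V} {x : ℝ}
    (h : RecStrength E S e x) :
    e.Nonempty ∧ e ⊆ S ∧ (∀ T, e ⊆ T → T ⊆ S → hPhi E T ≤ x) ∧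
      ∃ S' : Finset V, e ⊆ S' ∧ x = hPhi E S' := by
  induction h with
  | @cross S _ e Q hQ hmin he =>
    simp only [hcrossing, hinduced, Finset.mem_filter] at he
    obtain ⟨⟨heE, heS⟩, hec⟩ := he
    have hQne : Q.Nonempty := Finset.card_pos.mp (by have := hQ.2.2.2; omega)
    obtain ⟨q₀, hq₀⟩ := hQne
    have hene : e.Nonempty := by
      obtain ⟨v, hv, -⟩ := Finset.not_subset.mp (hec q₀ hq₀)
      exact ⟨v, hv⟩
    refine ⟨hene, heS, ?_, S, heS, rfl⟩
    intro T heT hTS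
    refine hPhi_le_of_cross hQ hmin hTS ?_
    intro q hq hTq
    exact hec q hq (heT.trans hTq)
  | @inside S p e Q x hQ hmin hp hep h ih =>
    obtain ⟨hene, _, hle, hex⟩ := ih
    have hpS : p ⊆ S := part_subset hQ hp
    have hpart : ∃ R, IsHPartition p R := recStrength_exists_partition h
    have hSx : hPhi E S ≤ x :=
      le_trans (le_hPhi_part hQ hmin hp hpart) (hle p hep (Finset.Subset.refl p))
    refine ⟨hene, hep.trans hpS, ?_, hex⟩
    intro T heT hTS
    by_cases hTp : T ⊆ p
    · exact hle T heT hTp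
    · refine le_trans (hPhi_le_of_cross hQ hmin hTS ?_) hSx
      intro q hq hTq
      apply hTp
      have hqp : q = p := by
        by_contra hne
        have hd : Disjoint q p := hQ.2.1 (Finset.mem_coe.mpr hq) (Finset.mem_coe.mpr hp) hne
        obtain ⟨v, hv⟩ := hene
        exact Finset.disjoint_left.mp hd (hTq (heT hv)) (hep hv)
      exact hqp ▸ hTq

end StrengthProof

/-- the recursively assigned strength of a hyperedge equals
`max_{e ⊆ S ⊆ V} Φ(H[S])`. -/
theorem strength_eq_max_phi (E : Finset (Finset V)) (e : Finset V) (he : e ∈ E)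
    (x : ℝ) (h : RecStrength E Finset.univ e x) :
    x = hstrength E e := by
  obtain ⟨-, -, hub, S', heS', hx⟩ := recStrength_main h
  have hub' : ∀ y ∈ {x : ℝ | ∃ S : Finset V, e ⊆ S ∧ x = hPhi E S}, y ≤ x := by
    rintro y ⟨S, hS, rfl⟩
    exact hub S hS (Finset.subset_univ S)
  have hmem : x ∈ {x : ℝ | ∃ S : Finset V, e ⊆ S ∧ x = hPhi E S} := ⟨S', heS', hx⟩
  exact le_antisymm (le_csSup ⟨x, hub'⟩ hmem) (csSup_le ⟨x, hmem⟩ hub')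
end

section
/- Let H = (V,E) be a hypergraph, and let V_1,...,V_r be connected components each of strength ≥ λ. If there is a hyperedge e whose strength in H is ≥ λ and which intersects every V_i, then the component ⋃_{i∈[r]} V_i has strength ≥ λ. -/
open Finset

variable {V : Type*} [DecidableEq V] [Fintype V]

/-- A set is `lam`-strong: every partition into `k` parts is crossed by at least
`(k-1)*lam` induced hyperedges. -/
def Strong (E : Finset (Finset V)) (lam : ℝ) (S : Finset V) : Prop :=
  ∀ P, IsHPartition S P →
    ((P.card : ℝ) - 1) * lam ≤ ((hcrossing (hinduced E S) P).card : ℝ)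

lemma strong_of_le_hPhi {E : Finset (Finset V)} {lam : ℝ} {S : Finset V}
    (h : lam ≤ hPhi E S) : Strong E lam S := by
  intro P hP
  have hmem : hcutVal (hinduced E S) P ∈
      {x : ℝ | ∃ P', IsHPartition S P' ∧ x = hcutVal (hinduced E S) P'} := ⟨P, hP, rfl⟩
  have hbdd : BddBelow {x : ℝ | ∃ P', IsHPartition S P' ∧ x = hcutVal (hinduced E S) P'} := by
    refine ⟨0, ?_⟩
    rintro x ⟨P', hP', rfl⟩
    unfold hcutVal
    apply div_nonneg (by positivity)
    have : (2:ℝ) ≤ (P'.card : ℝ) := by exact_mod_cast hP'.2.2.2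
    linarith
  have h1 : lam ≤ hcutVal (hinduced E S) P := le_trans h (csInf_le hbdd hmem)
  have h2 : (0:ℝ) < (P.card : ℝ) - 1 := by
    have : (2:ℝ) ≤ (P.card : ℝ) := by exact_mod_cast hP.2.2.2
    linarith
  unfold hcutVal at h1
  rw [le_div_iff₀ h2] at h1
  calc ((P.card : ℝ) - 1) * lam = lam * ((P.card : ℝ) - 1) := mul_comm _ _
    _ ≤ _ := h1

lemma le_hPhi_of_strong {E : Finset (Finset V)} {lam : ℝ} {S : Finset V}
    (h : Strong E lam S) (hex : ∃ P, IsHPartition S P) : lam ≤ hPhi E S := by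
  obtain ⟨P0, hP0⟩ := hex
  refine le_csInf ⟨hcutVal (hinduced E S) P0, P0, hP0, rfl⟩ ?_
  rintro x ⟨P, hP, rfl⟩
  have h1 := h P hP
  have h2 : (0:ℝ) < (P.card : ℝ) - 1 := by
    have : (2:ℝ) ≤ (P.card : ℝ) := by exact_mod_cast hP.2.2.2
    linarith
  unfold hcutVal
  rw [le_div_iff₀ h2]
  calc lam * ((P.card : ℝ) - 1) = ((P.card : ℝ) - 1) * lam := mul_comm _ _
    _ ≤ _ := h1

lemma hPhi_nonneg (E : Finset (Finset V)) (S : Finset V) : 0 ≤ hPhi E S := by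
  apply Real.sInf_nonneg
  rintro x ⟨P, hP, rfl⟩
  unfold hcutVal
  apply div_nonneg (by positivity)
  have : (2:ℝ) ≤ (P.card : ℝ) := by exact_mod_cast hP.2.2.2
  linarith

lemma hstrength_set_finite (E : Finset (Finset V)) (f : Finset V) :
    {x : ℝ | ∃ S : Finset V, f ⊆ S ∧ x = hPhi E S}.Finite := by
  apply Set.Finite.subset (Set.finite_range (hPhi E))
  rintro x ⟨S, _, rfl⟩; exact ⟨S, rfl⟩

lemma le_hstrength {E : Finset (Finset V)} {f S : Finset V} (hfS : f ⊆ S) :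
    hPhi E S ≤ hstrength E f :=
  le_csSup ((hstrength_set_finite E f).bddAbove) ⟨S, hfS, rfl⟩

lemma hstrength_nonneg (E : Finset (Finset V)) (f : Finset V) : 0 ≤ hstrength E f :=
  le_trans (hPhi_nonneg E univ) (le_hstrength (subset_univ f))

lemma hstrength_witness (E : Finset (Finset V)) (f : Finset V) :
    ∃ S : Finset V, f ⊆ S ∧ hstrength E f = hPhi E S := by
  have hne : {x : ℝ | ∃ S : Finset V, f ⊆ S ∧ x = hPhi E S}.Nonempty :=
    ⟨_, univ, subset_univ f, rfl⟩
  have := hne.csSup_mem (hstrength_set_finite E f)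
  exact this

/-- Key union lemma: the union of two intersecting strong sets is strong. -/
lemma strong_union {E : Finset (Finset V)} {lam : ℝ} {A B : Finset V}
    (hA : Strong E lam A) (hB : Strong E lam B) (hAB : (A ∩ B).Nonempty) :
    Strong E lam (A ∪ B) := by
  classical
  obtain ⟨x0, hx0⟩ := hAB
  have hx0A : x0 ∈ A := (mem_inter.mp hx0).1
  have hx0B : x0 ∈ B := (mem_inter.mp hx0).2
  intro P hP
  obtain ⟨hPne, hPdisj, hPsup, hPcard⟩ := hP
  have hpsub : ∀ p ∈ P, p ⊆ A ∪ B := by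
    intro p hp z hz
    rw [← hPsup]
    exact Finset.mem_sup.2 ⟨p, hp, hz⟩
  have hmemP : ∀ x, x ∈ A ∪ B ↔ ∃ p ∈ P, x ∈ p := by
    intro x; rw [← hPsup]; exact Finset.mem_sup
  set Pm := P.filter (fun p => (p ∩ A).Nonempty) with hPmdef
  set Pt := P.filter (fun p => ¬ (p ∩ A).Nonempty) with hPtdef
  have hcardsplit : Pm.card + Pt.card = P.card :=
    Finset.card_filter_add_card_filter_not _
  have hPmne : Pm.Nonempty := by
    have hx : x0 ∈ A ∪ B := mem_union_left _ hx0A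
    rw [hmemP] at hx
    obtain ⟨p, hp, hxp⟩ := hx
    exact ⟨p, mem_filter.2 ⟨hp, ⟨x0, mem_inter.2 ⟨hxp, hx0A⟩⟩⟩⟩
  set PA := Pm.image (fun p => p ∩ A) with hPAdef
  have hinjon : Set.InjOn (fun p => p ∩ A) Pm := by
    intro p hp q hq hpq
    by_contra hne
    have hd : Disjoint p q :=
      hPdisj (mem_coe.2 ((filter_subset _ _) hp)) (mem_coe.2 ((filter_subset _ _) hq)) hne
    obtain ⟨z, hz⟩ := (mem_filter.mp hp).2
    have hpq' : p ∩ A = q ∩ A := hpq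
    have hzq : z ∈ q := by
      have : z ∈ q ∩ A := hpq' ▸ hz
      exact (mem_inter.mp this).1
    exact (Finset.disjoint_left.mp hd) (mem_inter.mp hz).1 hzq
  have hPAcard : PA.card = Pm.card := Finset.card_image_of_injOn hinjon
  have hPA_ne : ∀ q ∈ PA, q.Nonempty := by
    intro q hq; obtain ⟨p, hp, rfl⟩ := mem_image.mp hq
    exact (mem_filter.mp hp).2
  have hPA_sup : PA.sup id = A := by
    apply le_antisymm
    · apply Finset.sup_le
      intro q hq
      obtain ⟨p, hp, rfl⟩ := mem_image.mp hq
      exact inter_subset_right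
    · intro x hx
      have hx' : x ∈ A ∪ B := mem_union_left _ hx
      rw [hmemP] at hx'
      obtain ⟨p, hp, hxp⟩ := hx'
      have hpPm : p ∈ Pm := mem_filter.2 ⟨hp, ⟨x, mem_inter.2 ⟨hxp, hx⟩⟩⟩
      exact Finset.mem_sup.2 ⟨p ∩ A, mem_image_of_mem _ hpPm, mem_inter.2 ⟨hxp, hx⟩⟩
  have hPA_disj : (PA : Set (Finset V)).PairwiseDisjoint id := by
    intro q1 hq1 q2 hq2 hne
    obtain ⟨p1, hp1, rfl⟩ := mem_image.mp (mem_coe.mp hq1)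
    obtain ⟨p2, hp2, rfl⟩ := mem_image.mp (mem_coe.mp hq2)
    have hp12 : p1 ≠ p2 := fun h => hne (by rw [h])
    have hd : Disjoint p1 p2 :=
      hPdisj (mem_coe.2 ((filter_subset _ _) hp1)) (mem_coe.2 ((filter_subset _ _) hp2)) hp12
    refine Finset.disjoint_left.2 fun z hz1 hz2 => ?_
    exact (Finset.disjoint_left.mp hd) (mem_inter.mp hz1).1 (mem_inter.mp hz2).1
  have hXA_sub : PA.Nonempty →
      hcrossing (hinduced E A) PA ⊆ hcrossing (hinduced E (A ∪ B)) P := by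
    intro hne g hg
    rw [hcrossing, mem_filter] at hg ⊢
    obtain ⟨hgind, hgcross⟩ := hg
    rw [hinduced, mem_filter] at hgind
    refine ⟨mem_filter.2 ⟨hgind.1, hgind.2.trans subset_union_left⟩, ?_⟩
    intro p hp hgp
    rcases Finset.eq_empty_or_nonempty (p ∩ A) with hemp | hpe
    · obtain ⟨q, hq⟩ := hne
      apply hgcross q hq
      intro z hz
      exact absurd (mem_inter.2 ⟨hgp hz, hgind.2 hz⟩) (by simp [hemp])
    · exact hgcross (p ∩ A) (mem_image_of_mem _ (mem_filter.2 ⟨hp, hpe⟩))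
        (fun z hz => mem_inter.2 ⟨hgp hz, hgind.2 hz⟩)
  -- the B side
  set Q := B \ Pt.sup id with hQdef
  set PB := insert Q Pt with hPBdef
  have hPt_subB : ∀ p ∈ Pt, p ⊆ B := by
    intro p hp z hz
    have h1 := hpsub p ((filter_subset _ _) hp)
    rcases mem_union.mp (h1 hz) with h | h
    · exact absurd ⟨z, mem_inter.2 ⟨hz, h⟩⟩ (mem_filter.mp hp).2
    · exact h
  have hQx0 : x0 ∈ Q := by
    rw [hQdef, mem_sdiff]
    refine ⟨hx0B, ?_⟩
    intro hx
    obtain ⟨p, hp, hxp⟩ := Finset.mem_sup.mp hx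
    exact (mem_filter.mp hp).2 ⟨x0, mem_inter.2 ⟨hxp, hx0A⟩⟩
  have hQnotPt : Q ∉ Pt := fun h => (mem_filter.mp h).2 ⟨x0, mem_inter.2 ⟨hQx0, hx0A⟩⟩
  have hPBcard : PB.card = Pt.card + 1 := by
    rw [hPBdef, card_insert_of_notMem hQnotPt]
  have hPB_ne : ∀ p ∈ PB, p.Nonempty := by
    intro p hp
    rcases mem_insert.mp hp with rfl | hp'
    · exact ⟨x0, hQx0⟩
    · exact hPne p ((filter_subset _ _) hp')
  have hdisjQp : ∀ p ∈ Pt, Disjoint Q p := by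
    intro p hp
    rw [Finset.disjoint_left]
    intro z hzQ hzp
    exact (mem_sdiff.mp hzQ).2 (Finset.mem_sup.2 ⟨p, hp, hzp⟩)
  have hPB_disj : (PB : Set (Finset V)).PairwiseDisjoint id := by
    intro p1 hp1 p2 hp2 hne12
    simp only [hPBdef, coe_insert, Set.mem_insert_iff, mem_coe] at hp1 hp2
    rcases hp1 with rfl | hp1 <;> rcases hp2 with rfl | hp2
    · exact absurd rfl hne12
    · exact hdisjQp p2 hp2
    · exact (hdisjQp p1 hp1).symm
    · exact hPdisj (mem_coe.2 ((filter_subset _ _) hp1))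
        (mem_coe.2 ((filter_subset _ _) hp2)) hne12
  have hPB_sup : PB.sup id = B := by
    apply le_antisymm
    · apply Finset.sup_le
      intro p hp
      rcases mem_insert.mp hp with rfl | hp'
      · exact sdiff_subset
      · exact hPt_subB p hp'
    · intro z hz
      by_cases hzs : z ∈ Pt.sup id
      · obtain ⟨p, hp, hzp⟩ := Finset.mem_sup.mp hzs
        exact Finset.mem_sup.2 ⟨p, mem_insert_of_mem hp, hzp⟩
      · exact Finset.mem_sup.2 ⟨Q, mem_insert_self _ _, mem_sdiff.2 ⟨hz, hzs⟩⟩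
  have hXB_sub : hcrossing (hinduced E B) PB ⊆ hcrossing (hinduced E (A ∪ B)) P := by
    intro g hg
    rw [hcrossing, mem_filter] at hg ⊢
    obtain ⟨hgind, hgcross⟩ := hg
    rw [hinduced, mem_filter] at hgind
    refine ⟨mem_filter.2 ⟨hgind.1, hgind.2.trans subset_union_right⟩, ?_⟩
    intro p hp hgp
    by_cases hpt : p ∈ Pt
    · exact hgcross p (mem_insert_of_mem hpt) hgp
    · apply hgcross Q (mem_insert_self _ _)
      intro z hz
      rw [hQdef, mem_sdiff]
      refine ⟨hgind.2 hz, ?_⟩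
      intro hzs
      obtain ⟨q, hq, hzq⟩ := Finset.mem_sup.mp hzs
      have hqp : q ≠ p := fun h => hpt (h ▸ hq)
      have hd : Disjoint q p :=
        hPdisj (mem_coe.2 ((filter_subset _ _) hq)) (mem_coe.2 hp) hqp
      exact (Finset.disjoint_left.mp hd) hzq (hgp hz)
  have hXdisj : Disjoint (hcrossing (hinduced E A) PA) (hcrossing (hinduced E B) PB) := by
    rw [Finset.disjoint_left]
    intro g hgA hgB
    rw [hcrossing, mem_filter] at hgA hgB
    have hgsubA : g ⊆ A := (mem_filter.mp hgA.1).2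
    apply hgB.2 Q (mem_insert_self _ _)
    intro z hz
    rw [hQdef, mem_sdiff]
    refine ⟨(mem_filter.mp hgB.1).2 hz, ?_⟩
    intro hzs
    obtain ⟨q, hq, hzq⟩ := Finset.mem_sup.mp hzs
    exact (mem_filter.mp hq).2 ⟨z, mem_inter.2 ⟨hzq, hgsubA hz⟩⟩
  -- now count
  rcases Finset.eq_empty_or_nonempty Pt with hPtemp | hPtne
  · -- all parts meet A
    have ha : Pm.card = P.card := by
      rw [← hcardsplit, hPtemp]; simp
    have hPApart : IsHPartition A PA :=
      ⟨hPA_ne, hPA_disj, hPA_sup, by rw [hPAcard, ha]; exact hPcard⟩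
    have h1 := hA PA hPApart
    have h2 : (hcrossing (hinduced E A) PA).card ≤
        (hcrossing (hinduced E (A ∪ B)) P).card := by
      apply Finset.card_le_card
      apply hXA_sub
      rw [← Finset.card_pos, hPAcard, ha]; omega
    have h3 : ((PA.card : ℝ) - 1) = ((P.card : ℝ) - 1) := by
      rw [hPAcard, ha]
    rw [h3] at h1
    calc ((P.card : ℝ) - 1) * lam ≤ _ := h1
      _ ≤ _ := by exact_mod_cast h2
  · -- Pt nonempty
    have hPBpart : IsHPartition B PB := by
      refine ⟨hPB_ne, hPB_disj, hPB_sup, ?_⟩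
      rw [hPBcard]
      have := Finset.card_pos.2 hPtne
      omega
    have hB' := hB PB hPBpart
    have htB : ((Pt.card : ℝ)) * lam ≤ ((hcrossing (hinduced E B) PB).card : ℝ) := by
      have : ((PB.card : ℝ) - 1) = (Pt.card : ℝ) := by
        rw [hPBcard]; push_cast; ring
      rwa [this] at hB'
    by_cases ha2 : 2 ≤ Pm.card
    · -- use both sides
      have hPApart : IsHPartition A PA :=
        ⟨hPA_ne, hPA_disj, hPA_sup, by rw [hPAcard]; exact ha2⟩
      have h1 := hA PA hPApart
      have haA : ((Pm.card : ℝ) - 1) * lam ≤ ((hcrossing (hinduced E A) PA).card : ℝ) := by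
        have : ((PA.card : ℝ) - 1) = ((Pm.card : ℝ) - 1) := by rw [hPAcard]
        rwa [this] at h1
      have hsub : hcrossing (hinduced E A) PA ∪ hcrossing (hinduced E B) PB ⊆
          hcrossing (hinduced E (A ∪ B)) P := by
        apply Finset.union_subset
        · apply hXA_sub
          rw [← Finset.card_pos, hPAcard]; omega
        · exact hXB_sub
      have hcards : (hcrossing (hinduced E A) PA).card + (hcrossing (hinduced E B) PB).card ≤
          (hcrossing (hinduced E (A ∪ B)) P).card := by
        rw [← Finset.card_union_of_disjoint hXdisj]
        exact Finset.card_le_card hsub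
      have hk : (P.card : ℝ) = (Pm.card : ℝ) + (Pt.card : ℝ) := by
        exact_mod_cast hcardsplit.symm
      have hsplit : ((P.card : ℝ) - 1) * lam =
          ((Pm.card : ℝ) - 1) * lam + (Pt.card : ℝ) * lam := by
        rw [hk]; ring
      rw [hsplit]
      have : ((hcrossing (hinduced E A) PA).card : ℝ) +
          ((hcrossing (hinduced E B) PB).card : ℝ) ≤
          ((hcrossing (hinduced E (A ∪ B)) P).card : ℝ) := by exact_mod_cast hcards
      linarith
    · -- Pm.card = 1
      have ha1 : Pm.card = 1 := by
        have := Finset.card_pos.2 hPmne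
        omega
      have htk : Pt.card = P.card - 1 := by omega
      have h2 : (hcrossing (hinduced E B) PB).card ≤
          (hcrossing (hinduced E (A ∪ B)) P).card :=
        Finset.card_le_card hXB_sub
      have hkt : ((P.card : ℝ) - 1) = (Pt.card : ℝ) := by
        have h2' : 2 ≤ P.card := hPcard
        have : Pt.card + 1 = P.card := by omega
        push_cast [← this]; ring
      rw [hkt]
      calc (Pt.card : ℝ) * lam ≤ _ := htB
        _ ≤ _ := by exact_mod_cast h2

lemma strong_sup {E : Finset (Finset V)} {lam : ℝ} {A : Finset V}
    (hA : Strong E lam A) (s : Finset V) (T : V → Finset V)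
    (hT : ∀ v ∈ s, Strong E lam (T v) ∧ (A ∩ T v).Nonempty) :
    Strong E lam (A ∪ s.sup T) := by
  classical
  induction s using Finset.induction with
  | empty => simpa using hA
  | @insert a s ha ih =>
    have heq : A ∪ (insert a s).sup T = (A ∪ s.sup T) ∪ T a := by
      rw [Finset.sup_insert, Finset.sup_eq_union, ← Finset.union_assoc,
        Finset.union_right_comm]
    rw [heq]
    have ihs := ih (fun v hv => hT v (mem_insert_of_mem hv))
    have hTa := hT a (mem_insert_self _ _)
    apply strong_union ihs hTa.1
    obtain ⟨z, hz⟩ := hTa.2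
    exact ⟨z, mem_inter.2 ⟨mem_union_left _ (mem_inter.mp hz).1, (mem_inter.mp hz).2⟩⟩

lemma chain_strong {E : Finset (Finset V)} {lam : ℝ} {Ci : Finset V} {Se : Finset V}
    (hSe : Strong E lam Se)
    (hedge : ∀ g ∈ E, g ⊆ Ci → ∃ Sg, g ⊆ Sg ∧ Strong E lam Sg)
    {u v : V} (hu : u ∈ Se)
    (hreach : Relation.ReflTransGen (fun a b => ∃ g ∈ E, g ⊆ Ci ∧ a ∈ g ∧ b ∈ g) v u) :
    ∃ T, Strong E lam T ∧ Se ⊆ T ∧ v ∈ T := by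
  induction hreach using Relation.ReflTransGen.head_induction_on with
  | refl => exact ⟨Se, hSe, subset_rfl, hu⟩
  | head hstep _ ih =>
    obtain ⟨g, hgE, hgC, hag, hcg⟩ := hstep
    obtain ⟨T, hT, hSeT, hcT⟩ := ih
    obtain ⟨Sg, hgSg, hSgStrong⟩ := hedge g hgE hgC
    refine ⟨T ∪ Sg, strong_union hT hSgStrong ⟨_, mem_inter.2 ⟨hcT, hgSg hcg⟩⟩,
      hSeT.trans subset_union_left, mem_union_right _ (hgSg hag)⟩

lemma exists_partition_pair {S : Finset V} {x y : V} (hx : x ∈ S) (hy : y ∈ S)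
    (hxy : x ≠ y) : ∃ P, IsHPartition S P := by
  classical
  refine ⟨{{x}, S.erase x}, ?_, ?_, ?_, ?_⟩
  · intro p hp
    rcases mem_insert.mp hp with rfl | hp'
    · exact ⟨x, mem_singleton_self x⟩
    · rw [mem_singleton.mp hp']
      exact ⟨y, mem_erase.2 ⟨hxy.symm, hy⟩⟩
  · intro p hp q hq hpq
    simp only [coe_insert, Set.mem_insert_iff, coe_singleton, Set.mem_singleton_iff] at hp hq
    rcases hp with rfl | rfl <;> rcases hq with rfl | rfl
    · exact absurd rfl hpq
    · exact Finset.disjoint_singleton_left.2 (notMem_erase x S)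
    · exact (Finset.disjoint_singleton_left.2 (notMem_erase x S)).symm
    · exact absurd rfl hpq
  · rw [Finset.sup_insert, Finset.sup_singleton]
    simp only [id]
    rw [Finset.sup_eq_union]
    ext z
    simp only [Finset.mem_union, Finset.mem_singleton, Finset.mem_erase]
    constructor
    · rintro (rfl | ⟨_, h⟩)
      · exact hx
      · exact h
    · intro h
      by_cases hz : z = x
      · exact Or.inl hz
      · exact Or.inr ⟨hz, h⟩
  · have hne : ({x} : Finset V) ≠ S.erase x := by
      intro h
      have : y ∈ ({x} : Finset V) := h ▸ mem_erase.2 ⟨hxy.symm, hy⟩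
      exact hxy.symm (mem_singleton.mp this)
    rw [card_insert_of_notMem (by simpa using hne), card_singleton]

lemma hPartition_two_elems {S : Finset V} {P : Finset (Finset V)}
    (hP : IsHPartition S P) : ∃ x ∈ S, ∃ y ∈ S, x ≠ y := by
  obtain ⟨hne, hdisj, hsup, hcard⟩ := hP
  obtain ⟨p, hp, q, hq, hpq⟩ := Finset.one_lt_card.mp hcard
  obtain ⟨x, hx⟩ := hne p hp
  obtain ⟨y, hy⟩ := hne q hq
  refine ⟨x, ?_, y, ?_, ?_⟩
  · rw [← hsup]; exact Finset.mem_sup.2 ⟨p, hp, hx⟩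
  · rw [← hsup]; exact Finset.mem_sup.2 ⟨q, hq, hy⟩
  · intro h
    exact Finset.disjoint_left.mp
      (hdisj (mem_coe.2 hp) (mem_coe.2 hq) hpq) hx (h ▸ hy)

/-- if connected components `C 1, ..., C r`, each of strength `≥ λ`,
are connected by a hyperedge of strength `≥ λ` in `H` intersecting every `C i`,
then their union has strength `≥ λ`. -/
theorem union_strength (E : Finset (Finset V)) (r : ℕ) (hr : 1 ≤ r)
    (C : Fin r → Finset V)
    (hdisj : Pairwise (Function.onFun Disjoint C))
    (hconn : ∀ i, HConnected E (C i))
    (lam : ℝ)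
    (hstr : ∀ i, ∀ e ∈ hinduced E (C i), lam ≤ hstrength E e)
    (e : Finset V) (he : e ∈ E) (helam : lam ≤ hstrength E e)
    (hinter : ∀ i, (e ∩ C i).Nonempty) :
    ∀ f ∈ hinduced E (Finset.univ.biUnion C), lam ≤ hstrength E f := by
  classical
  intro f hf
  rcases le_or_gt lam 0 with hlam | hlam
  · exact hlam.trans (hstrength_nonneg E f)
  -- lam > 0
  obtain ⟨Se, heSe, hSeval⟩ := hstrength_witness E e
  have hSePhi : lam ≤ hPhi E Se := hSeval ▸ helam
  have hSeStrong : Strong E lam Se := strong_of_le_hPhi hSePhi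
  have hSepart : ∃ P, IsHPartition Se P := by
    by_contra h
    push_neg at h
    have hz : hPhi E Se = 0 := by
      unfold hPhi
      have hempty : {x : ℝ | ∃ P, IsHPartition Se P ∧ x = hcutVal (hinduced E Se) P} =
          (∅ : Set ℝ) := by
        ext x
        simp only [Set.mem_setOf_eq, Set.mem_empty_iff_false, iff_false, not_exists]
        intro P hP
        exact absurd hP.1 (h P)
      rw [hempty]
      exact Real.sInf_empty
    rw [hz] at hSePhi
    linarith
  have i0 : Fin r := ⟨0, hr⟩
  have hene : e.Nonempty := by
    obtain ⟨z, hz⟩ := hinter i0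
    exact ⟨z, (mem_inter.mp hz).1⟩
  -- each vertex of the union lies in a strong set containing Se
  have hTv : ∀ v : V, ∃ T, Strong E lam T ∧ Se ⊆ T ∧
      (v ∈ Finset.univ.biUnion C → v ∈ T) := by
    intro v
    by_cases hv : v ∈ Finset.univ.biUnion C
    · rw [mem_biUnion] at hv
      obtain ⟨i, _, hvC⟩ := hv
      obtain ⟨u, hu⟩ := hinter i
      have hue : u ∈ e := (mem_inter.mp hu).1
      have huC : u ∈ C i := (mem_inter.mp hu).2
      have hreach := hconn i v hvC u huC
      have hedge : ∀ g ∈ E, g ⊆ C i → ∃ Sg, g ⊆ Sg ∧ Strong E lam Sg := by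
        intro g hgE hgC
        have hg' : g ∈ hinduced E (C i) := mem_filter.2 ⟨hgE, hgC⟩
        obtain ⟨Sg, hgSg, hval⟩ := hstrength_witness E g
        refine ⟨Sg, hgSg, strong_of_le_hPhi ?_⟩
        rw [← hval]
        exact hstr i g hg'
      obtain ⟨T, h1, h2, h3⟩ := chain_strong hSeStrong hedge (heSe hue) hreach
      exact ⟨T, h1, h2, fun _ => h3⟩
    · exact ⟨Se, hSeStrong, subset_rfl, fun h => absurd h hv⟩
  choose T hT1 hT2 hT3 using hTv
  set W := Se ∪ (Finset.univ.biUnion C).sup T with hWdef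
  have hWStrong : Strong E lam W := by
    apply strong_sup hSeStrong
    intro v _
    refine ⟨hT1 v, ?_⟩
    obtain ⟨z, hz⟩ := hene
    exact ⟨z, mem_inter.2 ⟨heSe hz, hT2 v (heSe hz)⟩⟩
  have hfW : f ⊆ W := by
    have hfsub : f ⊆ Finset.univ.biUnion C := (mem_filter.mp hf).2
    intro z hz
    have hzU := hfsub hz
    have : z ∈ T z := hT3 z hzU
    exact mem_union_right _ (Finset.mem_sup.2 ⟨z, hzU, this⟩)
  have hWpart : ∃ P, IsHPartition W P := by
    obtain ⟨P0, hP0⟩ := hSepart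
    obtain ⟨x, hx, y, hy, hxy⟩ := hPartition_two_elems hP0
    exact exists_partition_pair (mem_union_left _ hx) (mem_union_left _ hy) hxy
  have : lam ≤ hPhi E W := le_hPhi_of_strong hWStrong hWpart
  exact this.trans (le_hstrength hfW)
end

section
/- If the minimum normalized k-cut of a hypergraph H has value φ and is achieved by the partition V_1,...,V_k, then for each i the minimum normalized k-cut of the induced subhypergraph H[V_i] is at least φ. -/
open Finset

variable {V : Type*} [DecidableEq V] [Fintype V]

/-- if the partition `P` achieves the minimum normalized k-cut of `H`,
of value `φ`, then every normalized cut of each induced subhypergraph `H[p]`,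
`p ∈ P`, has value at least `φ`. -/
theorem min_cut_parts (E : Finset (Finset V)) (P : Finset (Finset V)) (φ : ℝ)
    (hP : IsHPartition Finset.univ P)
    (hval : hcutVal E P = φ)
    (hmin : ∀ Q, IsHPartition Finset.univ Q → φ ≤ hcutVal E Q)
    (p : Finset V) (hp : p ∈ P) :
    ∀ Q, IsHPartition p Q → φ ≤ hcutVal (hinduced E p) Q := by
  intro Q hQ
  obtain ⟨hPne, hPdisj, hPsup, hPcard⟩ := hP
  obtain ⟨hQne, hQdisj, hQsup, hQcard⟩ := hQ
  have hQsub : ∀ q ∈ Q, q ⊆ p := by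
    intro q hq
    have := Finset.le_sup (f := id) hq
    rw [hQsup] at this
    exact this
  set R : Finset (Finset V) := (P.erase p) ∪ Q with hR
  have hdisjPQ : Disjoint (P.erase p) Q := by
    rw [Finset.disjoint_left]
    intro r hr hrQ
    obtain ⟨hrne, hrP⟩ := Finset.mem_erase.mp hr
    have hd : Disjoint r p := hPdisj hrP hp hrne
    obtain ⟨x, hx⟩ := hQne r hrQ
    exact (Finset.disjoint_left.mp hd hx (hQsub r hrQ hx))
  have hRcard : R.card = (P.card - 1) + Q.card := by
    rw [hR, Finset.card_union_of_disjoint hdisjPQ, Finset.card_erase_of_mem hp]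
  have hRpart : IsHPartition Finset.univ R := by
    refine ⟨?_, ?_, ?_, ?_⟩
    · intro r hr
      rcases Finset.mem_union.mp (hR ▸ hr) with h | h
      · exact hPne r (Finset.mem_of_mem_erase h)
      · exact hQne r h
    · intro a ha b hb hab
      replace ha : a ∈ P.erase p ∨ a ∈ Q := Finset.mem_union.mp (hR ▸ ha)
      replace hb : b ∈ P.erase p ∨ b ∈ Q := Finset.mem_union.mp (hR ▸ hb)
      have key : ∀ r ∈ P.erase p, ∀ q ∈ Q, Disjoint (id r) (id q) := by
        intro r hr q hq
        obtain ⟨hrne, hrP⟩ := Finset.mem_erase.mp hr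
        exact (hPdisj hrP hp hrne).mono_right (hQsub q hq)
      rcases ha with ha | ha <;> rcases hb with hb | hb
      · exact hPdisj (Finset.mem_of_mem_erase ha) (Finset.mem_of_mem_erase hb) hab
      · exact key a ha b hb
      · exact (key b hb a ha).symm
      · exact hQdisj ha hb hab
    · apply le_antisymm (Finset.sup_le (fun r _ => Finset.subset_univ r))
      rw [← hPsup]
      apply Finset.sup_le
      intro r hr
      by_cases hrp : r = p
      · subst hrp
        rw [← hQsup]
        exact Finset.sup_mono (hR ▸ Finset.subset_union_right)
      · exact Finset.le_sup (f := id) (hR ▸ Finset.mem_union_left _ (Finset.mem_erase.mpr ⟨hrp, hr⟩))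
    · have h1 : 1 ≤ P.card := by omega
      omega
  have hQnonempty : Q.Nonempty := Finset.card_pos.mp (by omega)
  have hcross : hcrossing E R = hcrossing E P ∪ hcrossing (hinduced E p) Q := by
    ext e
    simp only [hcrossing, hinduced, Finset.mem_union, Finset.mem_filter, Finset.mem_filter]
    constructor
    · rintro ⟨heE, hcr⟩
      by_cases hcp : ∀ r ∈ P, ¬ e ⊆ r
      · exact Or.inl ⟨heE, hcp⟩
      · push_neg at hcp
        obtain ⟨r, hrP, her⟩ := hcp
        have hrp : r = p := by
          by_contra h
          exact hcr r (hR ▸ Finset.mem_union_left _ (Finset.mem_erase.mpr ⟨h, hrP⟩)) her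
        rw [hrp] at her
        refine Or.inr ⟨⟨heE, her⟩, fun q hq => hcr q (hR ▸ Finset.mem_union_right _ hq)⟩
    · rintro (⟨heE, hcp⟩ | ⟨⟨heE, hep⟩, hcq⟩)
      · refine ⟨heE, fun r hr her => ?_⟩
        rcases Finset.mem_union.mp (hR ▸ hr) with h | h
        · exact hcp r (Finset.mem_of_mem_erase h) her
        · exact hcp p hp (her.trans (hQsub r h))
      · refine ⟨heE, fun r hr her => ?_⟩
        rcases Finset.mem_union.mp (hR ▸ hr) with h | h
        · obtain ⟨q0, hq0⟩ := hQnonempty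
          obtain ⟨hrne, hrP⟩ := Finset.mem_erase.mp h
          have hd : Disjoint r p := hPdisj hrP hp hrne
          have hene : e.Nonempty := by
            by_contra hne
            rw [Finset.not_nonempty_iff_eq_empty] at hne
            exact hcq q0 hq0 (hne ▸ Finset.empty_subset _)
          obtain ⟨x, hx⟩ := hene
          exact Finset.disjoint_right.mp hd (hep hx) (her hx)
        · exact hcq r h her
  have hdisjcr : Disjoint (hcrossing E P) (hcrossing (hinduced E p) Q) := by
    rw [Finset.disjoint_left]
    intro e he he'
    simp only [hcrossing, hinduced, Finset.mem_filter] at he he'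
    exact he.2 p hp he'.1.2
  have hcard : (hcrossing E R).card
      = (hcrossing E P).card + (hcrossing (hinduced E p) Q).card := by
    rw [hcross, Finset.card_union_of_disjoint hdisjcr]
  have hmR := hmin R hRpart
  set a : ℝ := ((hcrossing E P).card : ℝ) with ha
  set b : ℝ := ((hcrossing (hinduced E p) Q).card : ℝ) with hb
  have hk2 : 2 ≤ P.card := hPcard
  have hj2 : 2 ≤ Q.card := hQcard
  have hkR : (R.card : ℝ) = (P.card : ℝ) + (Q.card : ℝ) - 1 := by
    rw [hRcard]
    have h1 : 1 ≤ P.card := by omega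
    push_cast [Nat.cast_sub h1]
    ring
  have hcrR : ((hcrossing E R).card : ℝ) = a + b := by
    rw [hcard]; push_cast; ring
  unfold hcutVal at hval hmR ⊢
  rw [hcrR, hkR] at hmR
  have hkpos : (0:ℝ) < (P.card : ℝ) - 1 := by
    have : (2:ℝ) ≤ (P.card : ℝ) := by exact_mod_cast hk2
    linarith
  have hjpos : (0:ℝ) < (Q.card : ℝ) - 1 := by
    have : (2:ℝ) ≤ (Q.card : ℝ) := by exact_mod_cast hj2
    linarith
  have hkne : ((P.card : ℝ) - 1) ≠ 0 := ne_of_gt hkpos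
  rw [le_div_iff₀ hjpos]
  have hA : a = φ * ((P.card : ℝ) - 1) := by
    rw [← hval]; field_simp; exact ha
  rw [le_div_iff₀ (by linarith : (0:ℝ) < (P.card : ℝ) + (Q.card : ℝ) - 1 - 1)] at hmR
  nlinarith [hmR, hA]
end

section
/- Let X_1,...,X_ℓ be independent random variables where X_i takes value 1/p_i with probability p_i and 0 otherwise, and suppose min_i p_i ≥ p. Then for every ε ∈ (0,1), with probability at least 1 − 2·e^{−0.38·ε²·ℓ·p}, the sum Σ_i X_i lies in the interval [(1−ε)ℓ, (1+ε)ℓ]. -/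
open MeasureTheory ProbabilityTheory

open Real Finset

lemma aux_poly {v : ℝ} (h0 : 0 ≤ v) (h2 : v ≤ 1/2) :
    v - v^2 + 0.38*v^2 ≤ (1-v) * (∑ n ∈ Finset.range 10, v^(n+1)/(n+1)) := by
  have hpow : ∀ k : ℕ, v^(k+2) ≤ v^2 * (1/2)^k := by
    intro k
    calc v^(k+2) = v^2 * v^k := by ring
    _ ≤ v^2 * (1/2)^k :=
          mul_le_mul_of_nonneg_left (pow_le_pow_left₀ h0 h2 k) (sq_nonneg v)
  have h3 := hpow 1
  have h4 := hpow 2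
  have h5 := hpow 3
  have h6 := hpow 4
  have h7 := hpow 5
  have h8 := hpow 6
  have h9 := hpow 7
  have h10 := hpow 8
  have h11 := hpow 9
  simp only [Finset.sum_range_succ, Finset.sum_range_zero]
  push_cast
  nlinarith [sq_nonneg v]

-- upper-tail analytic inequality
lemma upper_analytic {x : ℝ} (hx0 : 0 < x) (hx1 : x ≤ 1) :
    x + 0.38*x^2 ≤ (1+x) * Real.log (1+x) := by
  set v := x / (1+x) with hv
  have h1x : (0:ℝ) < 1 + x := by linarith
  have hv0 : 0 ≤ v := by positivity
  have hv2 : v ≤ 1/2 := by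
    rw [hv, div_le_iff₀ h1x]; linarith
  have hvlt : |v| < 1 := by rw [abs_of_nonneg hv0]; linarith
  have h1v : (1:ℝ) - v = (1+x)⁻¹ := by
    rw [hv]; field_simp; ring
  have hlog : Real.log (1+x) = -Real.log (1-v) := by
    rw [h1v, Real.log_inv]; ring
  have hS : HasSum (fun n : ℕ => v^(n+1)/(n+1)) (Real.log (1+x)) := by
    rw [hlog]; exact hasSum_pow_div_log_of_abs_lt_one hvlt
  have hpart : ∑ n ∈ Finset.range 10, v^(n+1)/(n+1) ≤ Real.log (1+x) :=
    sum_le_hasSum _ (fun i _ => by positivity) hS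
  have key := aux_poly hv0 hv2
  have hvx : v * (1+x) = x := by rw [hv]; field_simp
  have h1vpos : (0:ℝ) < 1 - v := by rw [h1v]; positivity
  -- (1+x) * log(1+x) ≥ (1+x) * Σ ≥ (1+x)*(v - 0.62 v^2)/(1-v) = x + 0.38 x^2
  have hchain : (1+x) * (∑ n ∈ Finset.range 10, v^(n+1)/(n+1)) ≤ (1+x) * Real.log (1+x) := by
    gcongr
  have h1vi : (1 - v) * (1+x) = 1 := by rw [h1v]; field_simp
  nlinarith [key, hvx, h1vi, hchain, sq_nonneg (1+x), mul_pos h1x h1x]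

-- lower-tail analytic inequality
lemma lower_analytic {e : ℝ} (he0 : 0 < e) (he1 : e < 1) :
    0.38*e^2 ≤ e + (1-e) * Real.log (1-e) := by
  have habs : |e| < 1 := by rw [abs_of_nonneg he0.le]; exact he1
  have hS : HasSum (fun n : ℕ => e^(n+1)/(n+1)) (-Real.log (1-e)) :=
    hasSum_pow_div_log_of_abs_lt_one habs
  have hsum := Summable.sum_add_tsum_nat_add (f := fun n : ℕ => e^(n+1)/(n+1)) 2 hS.summable
  rw [hS.tsum_eq] at hsum
  have hgeom : ∑' n : ℕ, (e^3/3) * e^n = (e^3/3) * (1-e)⁻¹ := by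
    rw [tsum_mul_left, tsum_geometric_of_lt_one he0.le he1]
  have htail : ∑' i : ℕ, (fun n : ℕ => e^(n+1)/(n+1)) (i+2) ≤ (e^3/3) * (1-e)⁻¹ := by
    rw [← hgeom]
    refine Summable.tsum_le_tsum (fun n => ?_) ((summable_nat_add_iff 2).mpr hS.summable) ?_
    · push_cast
      rw [div_le_iff₀ (by positivity)]
      have h1 : (1:ℝ) ≤ ((n:ℝ)+2+1)/3 := by
        have : (0:ℝ) ≤ (n:ℝ) := Nat.cast_nonneg n
        linarith
      have h2 : (0:ℝ) ≤ e^3 * e^n := by positivity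
      calc e^(n+2+1) = e^3 * e^n * 1 := by ring
      _ ≤ e^3 * e^n * (((n:ℝ)+2+1)/3) := mul_le_mul_of_nonneg_left h1 h2
      _ = e^3/3 * e^n * ((n:ℝ)+2+1) := by ring
    · exact (summable_geometric_of_lt_one he0.le he1).mul_left _
  have hle : -Real.log (1-e) ≤ e + e^2/2 + (e^3/3) * (1-e)⁻¹ := by
    have h2 : ∑ i ∈ Finset.range 2, (fun n : ℕ => e^(n+1)/((n:ℝ)+1)) i = e + e^2/2 := by
      norm_num [Finset.sum_range_succ]
    rw [← hsum, h2]
    linarith [htail]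
  have h1e : (0:ℝ) < 1 - e := by linarith
  have hmul : (1-e) * (-Real.log (1-e)) ≤ (1-e) * (e + e^2/2) + e^3/3 := by
    calc (1-e) * (-Real.log (1-e)) ≤ (1-e) * (e + e^2/2 + (e^3/3) * (1-e)⁻¹) :=
          mul_le_mul_of_nonneg_left hle h1e.le
    _ = (1-e) * (e + e^2/2) + (e^3/3) * ((1-e) * (1-e)⁻¹) := by ring
    _ = (1-e) * (e + e^2/2) + e^3/3 := by rw [mul_inv_cancel₀ h1e.ne', mul_one]
  nlinarith [hmul, pow_pos he0 3]


-- comparison: p e^{t/p} + 1 - p decreasing in p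
lemma factor_mono {q p t : ℝ} (hq : 0 < q) (hqp : q ≤ p) :
    1 + p * (Real.exp (t/p) - 1) ≤ 1 + q * (Real.exp (t/q) - 1) := by
  have hp : 0 < p := hq.trans_le hqp
  have hs0 : 0 ≤ q / p := by positivity
  have hs1 : q / p ≤ 1 := (div_le_one hp).mpr hqp
  have hconv := convexOn_exp.2 (Set.mem_univ (t/q)) (Set.mem_univ (0:ℝ))
    hs0 (by linarith : (0:ℝ) ≤ 1 - q/p) (by ring)
  simp only [smul_eq_mul, mul_zero, add_zero, Real.exp_zero, mul_one] at hconv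
  have harg : q / p * (t / q) = t / p := by field_simp
  rw [harg] at hconv
  -- hconv : exp (t/p) ≤ q/p * exp (t/q) + (1 - q/p)
  have h1 := mul_le_mul_of_nonneg_left hconv hp.le
  have h2 : p * (q / p * rexp (t/q) + (1 - q/p)) = q * rexp (t/q) + p - q := by
    field_simp; ring
  rw [h2] at h1
  nlinarith [h1]

-- two-point distribution: integral of exp(t Y)
lemma two_point_mgf {Ω : Type*} [MeasureSpace Ω] [IsProbabilityMeasure (ℙ : Measure Ω)]
    (Y : Ω → ℝ) (hY : Measurable Y) (a q : ℝ) (hq0 : 0 < q) (hq1 : q ≤ 1) (ha0 : a ≠ 0)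
    (hA : ℙ {ω | Y ω = a} = ENNReal.ofReal q)
    (hB : ℙ {ω | Y ω = 0} = ENNReal.ofReal (1 - q)) (t : ℝ) :
    Integrable (fun ω => Real.exp (t * Y ω)) ℙ ∧
    mgf Y ℙ t = 1 + q * (Real.exp (t * a) - 1) := by
  set A : Set Ω := {ω | Y ω = a} with hAdef
  have hAm : MeasurableSet A := hY (measurableSet_singleton a)
  have hBm : MeasurableSet {ω | Y ω = 0} := hY (measurableSet_singleton 0)
  have hdisj : Disjoint A {ω | Y ω = 0} := by
    rw [Set.disjoint_left]
    rintro ω (h1 : Y ω = a) (h2 : Y ω = 0)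
    exact ha0 (h1 ▸ h2 ▸ rfl)
  have hunion : ℙ (A ∪ {ω | Y ω = 0}) = 1 := by
    rw [measure_union hdisj hBm, hA, hB, ← ENNReal.ofReal_add hq0.le (by linarith)]
    norm_num
  have hae : ∀ᵐ ω ∂(ℙ : Measure Ω), ω ∈ A ∪ {ω | Y ω = 0} := by
    rw [← MeasureTheory.prob_compl_eq_zero_iff (hAm.union hBm)] at hunion
    exact (MeasureTheory.ae_iff).mpr hunion
  set g : Ω → ℝ := fun ω => A.indicator (fun _ => Real.exp (t * a)) ω
      + Aᶜ.indicator (fun _ => 1) ω with hgdef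
  have haeg : (fun ω => Real.exp (t * Y ω)) =ᵐ[ℙ] g := by
    filter_upwards [hae] with ω hω
    rcases hω with h1 | h2
    · have hωA : ω ∈ A := h1
      simp only [hgdef, Set.indicator_of_mem hωA,
        Set.indicator_of_notMem (Set.notMem_compl_iff.mpr hωA), add_zero]
      rw [show Y ω = a from h1]
    · by_cases hωA : ω ∈ A
      · simp only [hgdef, Set.indicator_of_mem hωA,
          Set.indicator_of_notMem (Set.notMem_compl_iff.mpr hωA), add_zero]
        rw [show Y ω = a from hωA]
      · simp only [hgdef, Set.indicator_of_notMem hωA,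
          Set.indicator_of_mem (Set.mem_compl hωA), zero_add]
        rw [show Y ω = 0 from h2, mul_zero, Real.exp_zero]
  have hgint : Integrable g ℙ :=
    ((integrable_const _).indicator hAm).add ((integrable_const _).indicator hAm.compl)
  have hint : Integrable (fun ω => Real.exp (t * Y ω)) ℙ := hgint.congr haeg.symm
  refine ⟨hint, ?_⟩
  have hPA : (ℙ A).toReal = q := by rw [hA, ENNReal.toReal_ofReal hq0.le]
  have hPAc : (ℙ Aᶜ).toReal = 1 - q := by
    rw [measure_compl hAm (measure_ne_top _ _), measure_univ, hA,
      ENNReal.toReal_sub_of_le (by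
        rw [show (1:ENNReal) = ENNReal.ofReal 1 by norm_num]
        exact ENNReal.ofReal_le_ofReal hq1) ENNReal.one_ne_top]
    rw [ENNReal.toReal_one, ENNReal.toReal_ofReal hq0.le]
  have : mgf Y ℙ t = ∫ ω, g ω ∂ℙ := integral_congr_ae haeg
  rw [this, integral_add ((integrable_const _).indicator hAm)
      ((integrable_const _).indicator hAm.compl),
    integral_indicator_const _ hAm, integral_indicator_const _ hAm.compl, measureReal_def, measureReal_def, hPA, hPAc]
  simp only [smul_eq_mul]
  ring

/-- if `X 1, ..., X ℓ` are independent, with `X i` equal to `1/p i`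
with probability `p i` and `0` otherwise, and `p ≤ p i` for all `i`, then with
probability at least `1 − 2·exp(−0.38·ε²·ℓ·p)` the sum `Σ X i` lies in
`[(1−ε)ℓ, (1+ε)ℓ]`. -/
theorem sampling_concentration {Ω : Type*} [MeasureSpace Ω]
    [IsProbabilityMeasure (ℙ : Measure Ω)]
    (ℓ : ℕ) (X : Fin ℓ → Ω → ℝ) (p : Fin ℓ → ℝ) (pmin : ℝ)
    (hmeas : ∀ i, Measurable (X i))
    (hindep : iIndepFun X ℙ)
    (hdist : ∀ i, ℙ {ω | X i ω = 1 / p i} = ENNReal.ofReal (p i) ∧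
                  ℙ {ω | X i ω = 0} = ENNReal.ofReal (1 - p i))
    (hp0 : 0 < pmin) (hp : ∀ i, pmin ≤ p i) (hp1 : ∀ i, p i ≤ 1)
    (ε : ℝ) (hε : ε ∈ Set.Ioo (0 : ℝ) 1) :
    ENNReal.ofReal (1 - 2 * Real.exp (-0.38 * ε ^ 2 * ℓ * pmin)) ≤
      ℙ {ω | (1 - ε) * ℓ ≤ ∑ i, X i ω ∧ ∑ i, X i ω ≤ (1 + ε) * ℓ} := by
  obtain ⟨hε0, hε1⟩ := hε
  have hpi0 : ∀ i, 0 < p i := fun i => hp0.trans_le (hp i)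
  -- per-variable facts
  have htp : ∀ (t : ℝ) (i : Fin ℓ),
      Integrable (fun ω => Real.exp (t * X i ω)) ℙ ∧
      mgf (X i) ℙ t = 1 + p i * (Real.exp (t / p i) - 1) := by
    intro t i
    have h := two_point_mgf (X i) (hmeas i) (1 / p i) (p i) (hpi0 i) (hp1 i)
      (by simp [(hpi0 i).ne'] : 1 / p i ≠ 0) (hdist i).1 (hdist i).2 t
    rwa [mul_one_div] at h
  have hint_sum : ∀ t : ℝ, Integrable (fun ω => Real.exp (t * (∑ i, X i) ω)) ℙ :=
    fun t => hindep.integrable_exp_mul_sum hmeas (fun i _ => (htp t i).1)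
  have hmgf_sum : ∀ t : ℝ, mgf (∑ i, X i) ℙ t = ∏ i, mgf (X i) ℙ t :=
    fun t => hindep.mgf_sum hmeas Finset.univ
  -- generic product bound
  have hprod : ∀ t c : ℝ, Real.exp (t / pmin) - 1 ≤ c →
      mgf (∑ i, X i) ℙ t ≤ Real.exp (pmin * c) ^ ℓ := by
    intro t c hc
    rw [hmgf_sum]
    calc (∏ i, mgf (X i) ℙ t) ≤ ∏ _i : Fin ℓ, Real.exp (pmin * c) := by
          apply Finset.prod_le_prod (fun i _ => mgf_nonneg) (fun i _ => ?_)
          rw [(htp t i).2]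
          calc 1 + p i * (Real.exp (t / p i) - 1)
              ≤ 1 + pmin * (Real.exp (t / pmin) - 1) := factor_mono hp0 (hp i)
            _ ≤ 1 + pmin * c := by nlinarith [hc, hp0]
            _ ≤ Real.exp (pmin * c) := by linarith [Real.add_one_le_exp (pmin * c)]
    _ = Real.exp (pmin * c) ^ ℓ := by
          rw [Finset.prod_const, Finset.card_univ, Fintype.card_fin]
  -- upper tail
  set t1 : ℝ := pmin * Real.log (1 + ε) with ht1def
  have hlog1 : 0 ≤ Real.log (1 + ε) := Real.log_nonneg (by linarith)
  have ht1 : 0 ≤ t1 := mul_nonneg hp0.le hlog1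
  have ht1p : t1 / pmin = Real.log (1 + ε) := by
    rw [ht1def, mul_div_cancel_left₀ _ hp0.ne']
  have hexp1 : Real.exp (t1 / pmin) - 1 ≤ ε := by
    rw [ht1p, Real.exp_log (by linarith)]; linarith
  have hup : (ℙ {ω | (1 + ε) * ℓ ≤ (∑ i, X i) ω}).toReal ≤
      Real.exp (-0.38 * ε ^ 2 * ℓ * pmin) := by
    calc (ℙ {ω | (1 + ε) * ℓ ≤ (∑ i, X i) ω}).toReal
        ≤ Real.exp (-t1 * ((1 + ε) * ℓ)) * mgf (∑ i, X i) ℙ t1 :=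
          measure_ge_le_exp_mul_mgf _ ht1 (hint_sum t1)
      _ ≤ Real.exp (-t1 * ((1 + ε) * ℓ)) * Real.exp (pmin * ε) ^ ℓ := by
          have := hprod t1 ε hexp1
          exact mul_le_mul_of_nonneg_left this (Real.exp_nonneg _)
      _ = Real.exp (-t1 * ((1 + ε) * ℓ) + ℓ * (pmin * ε)) := by
          rw [← Real.exp_nat_mul, ← Real.exp_add]
      _ ≤ Real.exp (-0.38 * ε ^ 2 * ℓ * pmin) := by
          apply Real.exp_le_exp.mpr
          have hkey := upper_analytic hε0 hε1.le
          have hl : (0:ℝ) ≤ (ℓ : ℝ) := Nat.cast_nonneg ℓ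
          have : -t1 * ((1 + ε) * ℓ) + ℓ * (pmin * ε)
              = (ℓ : ℝ) * pmin * (ε - (1 + ε) * Real.log (1 + ε)) := by
            rw [ht1def]; ring
          rw [this]
          nlinarith [mul_nonneg hl hp0.le, hkey]
  -- lower tail
  set t2 : ℝ := pmin * Real.log (1 - ε) with ht2def
  have hlog2 : Real.log (1 - ε) ≤ 0 := Real.log_nonpos (by linarith) (by linarith)
  have ht2 : t2 ≤ 0 := mul_nonpos_of_nonneg_of_nonpos hp0.le hlog2
  have ht2p : t2 / pmin = Real.log (1 - ε) := by
    rw [ht2def, mul_div_cancel_left₀ _ hp0.ne']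
  have hexp2 : Real.exp (t2 / pmin) - 1 ≤ -ε := by
    rw [ht2p, Real.exp_log (by linarith)]; linarith
  have hlo : (ℙ {ω | (∑ i, X i) ω ≤ (1 - ε) * ℓ}).toReal ≤
      Real.exp (-0.38 * ε ^ 2 * ℓ * pmin) := by
    calc (ℙ {ω | (∑ i, X i) ω ≤ (1 - ε) * ℓ}).toReal
        ≤ Real.exp (-t2 * ((1 - ε) * ℓ)) * mgf (∑ i, X i) ℙ t2 :=
          measure_le_le_exp_mul_mgf _ ht2 (hint_sum t2)
      _ ≤ Real.exp (-t2 * ((1 - ε) * ℓ)) * Real.exp (pmin * (-ε)) ^ ℓ := by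
          have := hprod t2 (-ε) hexp2
          exact mul_le_mul_of_nonneg_left this (Real.exp_nonneg _)
      _ = Real.exp (-t2 * ((1 - ε) * ℓ) + ℓ * (pmin * (-ε))) := by
          rw [← Real.exp_nat_mul, ← Real.exp_add]
      _ ≤ Real.exp (-0.38 * ε ^ 2 * ℓ * pmin) := by
          apply Real.exp_le_exp.mpr
          have hkey := lower_analytic hε0 hε1
          have hl : (0:ℝ) ≤ (ℓ : ℝ) := Nat.cast_nonneg ℓ
          have : -t2 * ((1 - ε) * ℓ) + ℓ * (pmin * (-ε))
              = (ℓ : ℝ) * pmin * (-((1 - ε) * Real.log (1 - ε)) - ε) := by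
            rw [ht2def]; ring
          rw [this]
          nlinarith [mul_nonneg hl hp0.le, hkey]
  -- assembly
  have hSm : Measurable (∑ i, X i) := by
    have : (∑ i, X i) = fun ω => ∑ i, X i ω := by
      ext ω; simp [Finset.sum_apply]
    rw [this]
    exact Finset.measurable_sum _ (fun i _ => hmeas i)
  have hset : {ω | (1 - ε) * ℓ ≤ ∑ i, X i ω ∧ ∑ i, X i ω ≤ (1 + ε) * ℓ}
      = {ω | (1 - ε) * ℓ ≤ (∑ i, X i) ω ∧ (∑ i, X i) ω ≤ (1 + ε) * ℓ} := by
    simp only [Finset.sum_apply]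
  rw [hset]
  set G : Set Ω := {ω | (1 - ε) * ℓ ≤ (∑ i, X i) ω ∧ (∑ i, X i) ω ≤ (1 + ε) * ℓ} with hGdef
  have hGm : MeasurableSet G := by
    apply MeasurableSet.inter
    · exact measurableSet_le measurable_const hSm
    · exact measurableSet_le hSm measurable_const
  have hsub : Gᶜ ⊆ {ω | (∑ i, X i) ω ≤ (1 - ε) * ℓ} ∪ {ω | (1 + ε) * ℓ ≤ (∑ i, X i) ω} := by
    intro ω hω
    simp only [hGdef, Set.mem_compl_iff, Set.mem_setOf_eq, not_and_or, not_le] at hω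
    rcases hω with h | h
    · exact Or.inl (le_of_lt h)
    · exact Or.inr (le_of_lt h)
  have hGc : (ℙ Gᶜ).toReal ≤ 2 * Real.exp (-0.38 * ε ^ 2 * ℓ * pmin) := by
    calc (ℙ Gᶜ).toReal
        ≤ ((ℙ {ω | (∑ i, X i) ω ≤ (1 - ε) * ℓ}) + ℙ {ω | (1 + ε) * ℓ ≤ (∑ i, X i) ω}).toReal := by
          apply ENNReal.toReal_mono
          · exact ENNReal.add_ne_top.mpr ⟨measure_ne_top _ _, measure_ne_top _ _⟩
          · exact le_trans (measure_mono hsub) (measure_union_le _ _)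
      _ = (ℙ {ω | (∑ i, X i) ω ≤ (1 - ε) * ℓ}).toReal
          + (ℙ {ω | (1 + ε) * ℓ ≤ (∑ i, X i) ω}).toReal :=
          ENNReal.toReal_add (measure_ne_top _ _) (measure_ne_top _ _)
      _ ≤ 2 * Real.exp (-0.38 * ε ^ 2 * ℓ * pmin) := by linarith [hup, hlo]
  have hone : (ℙ G).toReal + (ℙ Gᶜ).toReal = 1 := by
    rw [← ENNReal.toReal_add (measure_ne_top _ _) (measure_ne_top _ _),
      measure_add_measure_compl hGm, measure_univ]
    exact ENNReal.toReal_one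
  exact ENNReal.ofReal_le_of_le_toReal (by linarith)
end

section
/- Let p be a prime, x ∈ ℤ^u a vector with at most one nonzero coordinate, and define α = Σ_i x_i·i, φ = Σ_i x_i, and τ_z = Σ_i x_i·z^i mod p for z ∈ ℤ_p. If x is nonzero and exactly 1-sparse with nonzero coordinate at index j, then φ = x_j ≠ 0, α/φ = j, and τ_z ≡ φ·z^{α/φ} (mod p) for every z. Conversely, if x has at least two nonzero coordinates with all |x_i| < p and u < p, then for z chosen uniformly at random from ℤ_p, Pr[τ_z ≡ φ·z^{α/φ} (mod p) and φ divides α and 1 ≤ α/φ ≤ u] ≤ u/p. -/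
open Finset

lemma cast_ne_zero_of_abs_lt (p : ℕ) [Fact p.Prime] (a : ℤ) (h0 : a ≠ 0)
    (h : |a| < (p : ℤ)) : (a : ZMod p) ≠ 0 := by
  rw [Ne, ZMod.intCast_zmod_eq_zero_iff_dvd]
  intro hd
  have h1 : (p : ℤ) ∣ |a| := (dvd_abs _ _).mpr hd
  have h2 : (p : ℤ) ≤ |a| := Int.le_of_dvd (abs_pos.mpr h0) h1
  omega

open Classical in
/- STATEMENT 12: 1-sparse recovery. For `x ∈ ℤ^u` (indexed by `1, ..., u`),
`α = Σ x_i·i`, `φ = Σ x_i`, and `τ_z = Σ x_i·z^i` over `ℤ_p`: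
if `x` is exactly 1-sparse with nonzero coordinate `j`, then `φ = x_j ≠ 0`,
`α = φ·j`, and `τ_z = φ·z^(α/φ)` for every `z`; conversely if `x` has at least
two nonzero coordinates, all `|x_i| < p`, and `u < p`, then for uniform `z`,
`Pr[τ_z = φ·z^(α/φ) ∧ φ ∣ α ∧ 1 ≤ α/φ ≤ u] ≤ u/p`. -/
theorem one_sparse_recovery (p : ℕ) [Fact p.Prime] (u : ℕ) (x : Fin u → ℤ)
    (α φ : ℤ)
    (hα : α = ∑ i, x i * ((i : ℕ) + 1))
    (hφ : φ = ∑ i, x i) :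
    ((∃ j, x j ≠ 0 ∧ ∀ i, i ≠ j → x i = 0) →
      ∃ j, x j ≠ 0 ∧ φ = x j ∧ α = φ * ((j : ℕ) + 1) ∧
        ∀ z : ZMod p,
          ∑ i, (x i : ZMod p) * z ^ ((i : ℕ) + 1) = (φ : ZMod p) * z ^ ((j : ℕ) + 1))
    ∧ ((∃ j j', j ≠ j' ∧ x j ≠ 0 ∧ x j' ≠ 0) → (∀ i, |x i| < (p : ℤ)) → u < p →
      ((Finset.univ.filter fun z : ZMod p =>
          φ ∣ α ∧ 1 ≤ α / φ ∧ α / φ ≤ (u : ℤ) ∧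
          ∑ i, (x i : ZMod p) * z ^ ((i : ℕ) + 1)
            = (φ : ZMod p) * z ^ (α / φ).toNat).card : ℝ) / (p : ℝ)
        ≤ (u : ℝ) / (p : ℝ)) := by
  constructor
  · rintro ⟨j, hj, ho⟩
    have hφj : φ = x j := by
      rw [hφ, Finset.sum_eq_single j (fun i _ hi => ho i hi)
        (fun h => absurd (mem_univ j) h)]
    refine ⟨j, hj, hφj, ?_, ?_⟩
    · rw [hα, hφj, Finset.sum_eq_single j (fun i _ hi => by rw [ho i hi, zero_mul])
        (fun h => absurd (mem_univ j) h)]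
    · intro z
      rw [Finset.sum_eq_single j (fun i _ hi => by rw [ho i hi]; simp)
        (fun h => absurd (mem_univ j) h), hφj]
  · rintro ⟨j, j', hjj, hj, hj'⟩ hb hu
    have hp : 0 < (p : ℝ) := by exact_mod_cast (Fact.out : p.Prime).pos
    rw [div_le_div_iff_of_pos_right hp]
    by_cases hc : φ ∣ α ∧ 1 ≤ α / φ ∧ α / φ ≤ (u : ℤ)
    · obtain ⟨hd, h1, h2⟩ := hc
      set k : ℕ := (α / φ).toNat with hk
      have hk1 : 1 ≤ k := by omega
      have hku : k ≤ u := by omega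
      -- pick m among j, j' with m+1 ≠ k
      obtain ⟨m, hm0, hmk⟩ : ∃ m : Fin u, x m ≠ 0 ∧ (m : ℕ) + 1 ≠ k := by
        by_cases h : (j : ℕ) + 1 = k
        · exact ⟨j', hj', by
            have : (j : ℕ) ≠ (j' : ℕ) := fun h' => hjj (Fin.ext h')
            omega⟩
        · exact ⟨j, hj, h⟩
      set Q : Polynomial (ZMod p) :=
        (∑ i, Polynomial.C ((x i : ZMod p)) * Polynomial.X ^ ((i : ℕ) + 1))
          - Polynomial.C ((φ : ZMod p)) * Polynomial.X ^ k with hQ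
      have hcoeff : Q.coeff ((m : ℕ) + 1) = (x m : ZMod p) := by
        simp only [hQ, Polynomial.coeff_sub, Polynomial.finset_sum_coeff,
          Polynomial.coeff_C_mul, Polynomial.coeff_X_pow]
        rw [Finset.sum_eq_single m (fun i _ hi => by
            have : (i : ℕ) ≠ (m : ℕ) := fun h' => hi (Fin.ext h')
            simp [show ¬((m : ℕ) + 1 = (i : ℕ) + 1) by omega, Ne.symm this, Ne.symm hi])
          (fun h => absurd (mem_univ m) h)]
        simp [hmk]
      have hQne : Q ≠ 0 := fun h => by
        rw [h, Polynomial.coeff_zero] at hcoeff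
        exact cast_ne_zero_of_abs_lt p (x m) hm0 (hb m) hcoeff.symm
      have hdeg : Q.natDegree ≤ u := by
        apply le_trans (Polynomial.natDegree_sub_le _ _)
        apply max_le
        · apply Polynomial.natDegree_sum_le_of_forall_le
          intro i _
          apply le_trans (Polynomial.natDegree_C_mul_le _ _)
          rw [Polynomial.natDegree_X_pow]; omega
        · apply le_trans (Polynomial.natDegree_C_mul_le _ _)
          simpa using hku
      have hsub : (Finset.univ.filter fun z : ZMod p =>
          φ ∣ α ∧ 1 ≤ α / φ ∧ α / φ ≤ (u : ℤ) ∧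
          ∑ i, (x i : ZMod p) * z ^ ((i : ℕ) + 1)
            = (φ : ZMod p) * z ^ (α / φ).toNat) ⊆ Q.roots.toFinset := by
        intro z hz
        simp only [mem_filter, mem_univ, true_and] at hz
        rw [Multiset.mem_toFinset, Polynomial.mem_roots hQne]
        simp only [Polynomial.IsRoot, hQ, Polynomial.eval_sub, Polynomial.eval_finset_sum,
          Polynomial.eval_mul, Polynomial.eval_C, Polynomial.eval_pow, Polynomial.eval_X]
        rw [sub_eq_zero]
        exact hz.2.2.2
      have hcard : (Finset.univ.filter fun z : ZMod p =>
          φ ∣ α ∧ 1 ≤ α / φ ∧ α / φ ≤ (u : ℤ) ∧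
          ∑ i, (x i : ZMod p) * z ^ ((i : ℕ) + 1)
            = (φ : ZMod p) * z ^ (α / φ).toNat).card ≤ u := by
        calc _ ≤ Q.roots.toFinset.card := Finset.card_le_card hsub
        _ ≤ Multiset.card Q.roots := Q.roots.toFinset_card_le
        _ ≤ Q.natDegree := Q.card_roots'
        _ ≤ u := hdeg
      exact_mod_cast hcard
    · have : (Finset.univ.filter fun z : ZMod p =>
          φ ∣ α ∧ 1 ≤ α / φ ∧ α / φ ≤ (u : ℤ) ∧
          ∑ i, (x i : ZMod p) * z ^ ((i : ℕ) + 1)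
            = (φ : ZMod p) * z ^ (α / φ).toNat) = ∅ := by
        rw [Finset.filter_eq_empty_iff]
        intro z _
        tauto
      rw [this]
      simp
end

section
/- Let H be a hypergraph on n vertices and let Q be the set of crossing hyperedges of some partition V_1,...,V_k of the vertex set. Let λ(Q) = max_{e ∈ Q} λ_e be the maximum strength of a hyperedge in Q. Then |Q| ≥ λ(Q), i.e., the number of crossing hyperedges is at least the maximum strength of any crossing hyperedge. -/
open Finset

variable {V : Type*} [DecidableEq V] [Fintype V]

lemma hPhi_le_cut (E : Finset (Finset V)) (P : Finset (Finset V))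
    (hP : IsHPartition Finset.univ P)
    (e : Finset V) (he : e ∈ hcrossing E P) (S : Finset V) (heS : e ⊆ S) :
    hPhi E S ≤ ((hcrossing E P).card : ℝ) := by
  obtain ⟨hne, hdisj, hsup, hcard⟩ := hP
  rw [hcrossing, mem_filter] at he
  obtain ⟨heE, hecr⟩ := he
  -- e is nonempty
  have hPne : P.Nonempty := card_pos.mp (by omega)
  have hene : e.Nonempty := by
    by_contra h
    rw [not_nonempty_iff_eq_empty] at h
    exact hecr _ hPne.choose_spec (h ▸ empty_subset _)
  obtain ⟨v, hv⟩ := hene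
  -- find part p1 containing v
  have hvS : v ∈ P.sup id := hsup ▸ mem_univ v
  obtain ⟨p1, hp1, hvp1⟩ := mem_sup.mp hvS
  -- find w ∈ e, w ∉ p1, and its part p2
  obtain ⟨w, hw, hwp1⟩ := not_subset.mp (hecr p1 hp1)
  have hwS : w ∈ P.sup id := hsup ▸ mem_univ w
  obtain ⟨p2, hp2, hwp2⟩ := mem_sup.mp hwS
  have hp12 : p1 ≠ p2 := fun h => hwp1 (h ▸ hwp2)
  -- restricted partition
  set P' : Finset (Finset V) := (P.image (· ∩ S)).filter Finset.Nonempty with hP'def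
  have hmem' : ∀ p ∈ P, (p ∩ S).Nonempty → p ∩ S ∈ P' := fun p hp h =>
    mem_filter.mpr ⟨mem_image_of_mem _ hp, h⟩
  have hp1' : p1 ∩ S ∈ P' := hmem' _ hp1 ⟨v, mem_inter.mpr ⟨hvp1, heS hv⟩⟩
  have hp2' : p2 ∩ S ∈ P' := hmem' _ hp2 ⟨w, mem_inter.mpr ⟨hwp2, heS hw⟩⟩
  have hdisj12 : Disjoint p1 p2 := hdisj hp1 hp2 hp12
  have hne12 : p1 ∩ S ≠ p2 ∩ S := by
    intro h
    have : v ∈ p2 := mem_inter.mp (h ▸ mem_inter.mpr ⟨hvp1, heS hv⟩) |>.1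
    exact (disjoint_left.mp hdisj12 hvp1) this
  have hcard' : 2 ≤ P'.card := one_lt_card.mpr ⟨_, hp1', _, hp2', hne12⟩
  have hPart' : IsHPartition S P' := by
    refine ⟨fun p hp => (mem_filter.mp hp).2, ?_, ?_, hcard'⟩
    · intro x hx y hy hxy
      rw [Finset.mem_coe, hP'def, mem_filter] at hx hy
      obtain ⟨hx1, -⟩ := hx
      obtain ⟨hy1, -⟩ := hy
      obtain ⟨p, hp, rfl⟩ := mem_image.mp hx1
      obtain ⟨q, hq, rfl⟩ := mem_image.mp hy1
      have hpq : p ≠ q := fun h => hxy (by rw [h])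
      exact (Finset.disjoint_left.mpr fun a ha hb =>
        disjoint_left.mp (hdisj hp hq hpq) (mem_inter.mp ha).1 (mem_inter.mp hb).1 :
          Disjoint (id (p ∩ S)) (id (q ∩ S)))
    · apply le_antisymm
      · apply Finset.sup_le
        intro p hp
        obtain ⟨q, -, rfl⟩ := mem_image.mp (mem_filter.mp hp).1
        exact inter_subset_right
      · intro a ha
        have : a ∈ P.sup id := hsup ▸ mem_univ a
        obtain ⟨p, hp, hap⟩ := mem_sup.mp this
        exact mem_sup.mpr ⟨p ∩ S, hmem' p hp ⟨a, mem_inter.mpr ⟨hap, ha⟩⟩,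
          mem_inter.mpr ⟨hap, ha⟩⟩
  -- crossing edges of P' inside S are crossing edges of P
  have hsub : hcrossing (hinduced E S) P' ⊆ hcrossing E P := by
    intro f hf
    rw [hcrossing, mem_filter] at hf ⊢
    obtain ⟨hfI, hfcr⟩ := hf
    rw [hinduced, mem_filter] at hfI
    refine ⟨hfI.1, fun p hp hfp => ?_⟩
    have hfpS : f ⊆ p ∩ S := subset_inter hfp hfI.2
    have hfne : f.Nonempty := by
      by_contra h
      rw [not_nonempty_iff_eq_empty] at h
      exact hfcr _ hp1' (h ▸ empty_subset _)
    exact hfcr _ (hmem' p hp (hfne.mono hfpS)) hfpS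
  -- conclude
  have hx0 : hcutVal (hinduced E S) P' ∈
      {x : ℝ | ∃ Q, IsHPartition S Q ∧ x = hcutVal (hinduced E S) Q} :=
    ⟨P', hPart', rfl⟩
  have hbdd : BddBelow {x : ℝ | ∃ Q, IsHPartition S Q ∧ x = hcutVal (hinduced E S) Q} := by
    refine ⟨0, fun x hx => ?_⟩
    obtain ⟨Q, hQ, rfl⟩ := hx
    have h1 : (1 : ℝ) ≤ (Q.card : ℝ) - 1 := by
      have := hQ.2.2.2
      have : (2 : ℝ) ≤ (Q.card : ℝ) := by exact_mod_cast this
      linarith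
    exact div_nonneg (Nat.cast_nonneg _) (by linarith)
  refine le_trans (csInf_le hbdd hx0) ?_
  have h1 : (1 : ℝ) ≤ (P'.card : ℝ) - 1 := by
    have : (2 : ℝ) ≤ (P'.card : ℝ) := by exact_mod_cast hcard'
    linarith
  calc hcutVal (hinduced E S) P'
      ≤ ((hcrossing (hinduced E S) P').card : ℝ) :=
        div_le_self (Nat.cast_nonneg _) h1
    _ ≤ ((hcrossing E P).card : ℝ) := by exact_mod_cast card_le_card hsub

/-- the number of crossing hyperedges of a partition is at least the
strength of any crossing hyperedge (hence at least the maximum such strength). -/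
theorem cut_size_ge_max_strength (E : Finset (Finset V)) (P : Finset (Finset V))
    (hP : IsHPartition Finset.univ P)
    (e : Finset V) (he : e ∈ hcrossing E P) :
    hstrength E e ≤ ((hcrossing E P).card : ℝ) := by
  apply Real.sSup_le
  · rintro x ⟨S, hS, rfl⟩
    exact hPhi_le_cut E P hP e he S hS
  · exact Nat.cast_nonneg _
end
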